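/- arXiv:2303.17389 — 11 statements merged into one kernel-verified Lean document; each statement's English description precedes it below -/
import Mathlib

section
/- If c ≥ e^{-1/2} and h : S¹ → [0,∞) is a smooth solution of e^{-(h'² + h²)/2}(h'' + h) = c, then h is constant. -/
open Real

/-- For `x ≥ 0`, `x ≠ 1`, we have `x * exp(-x²/2) < exp(-1/2)`. -/
lemma aux_key_bound {x : ℝ} (hx : 0 ≤ x) (hx1 : x ≠ 1) :
    x * Real.exp (-x^2/2) < Real.exp (-1/2) := by
  rcases eq_or_lt_of_le hx with h0 | h0
  · rw [← h0]; simpa using Real.exp_pos (-1/2)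
  · have hlog : Real.log x < x - 1 := Real.log_lt_sub_one_of_pos h0 hx1
    have h1 : x * Real.exp (-x^2/2) = Real.exp (Real.log x + -x^2/2) := by
      rw [Real.exp_add, Real.exp_log h0]
    rw [h1]
    apply Real.exp_lt_exp.mpr
    nlinarith [sq_nonneg (x - 1)]

lemma aux_key_bound' {x : ℝ} (hx : 0 ≤ x) :
    x * Real.exp (-x^2/2) ≤ Real.exp (-1/2) := by
  rcases eq_or_ne x 1 with rfl | hx1
  · norm_num
  · exact (aux_key_bound hx hx1).le

/-- Derivative of `u c`. -/
lemma aux_u_deriv (c x : ℝ) :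
    HasDerivAt (fun y => Real.exp (-y^2/2) + c * y) (c - x * Real.exp (-x^2/2)) x := by
  have h1 : HasDerivAt (fun y : ℝ => -y^2/2) (-x) x := by
    have := ((hasDerivAt_pow 2 x).neg.div_const 2)
    exact this.congr_deriv (by ring)
  have h2 : HasDerivAt (fun y : ℝ => Real.exp (-y^2/2)) (Real.exp (-x^2/2) * (-x)) x :=
    (Real.hasDerivAt_exp _).comp x h1
  have h3 : HasDerivAt (fun y : ℝ => c * y) c x := by
    simpa using (hasDerivAt_id x).const_mul c
  exact (h2.add h3).congr_deriv (by ring)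

theorem stmt3 (c : ℝ) (hc : Real.exp (-1/2) ≤ c) (h : ℝ → ℝ)
    (hper : Function.Periodic h (2 * Real.pi))
    (hsmooth : ContDiff ℝ (⊤ : ℕ∞) h)
    (hnonneg : ∀ θ, 0 ≤ h θ)
    (hode : ∀ θ, Real.exp (-((deriv h θ)^2 + (h θ)^2)/2) * (deriv (deriv h) θ + h θ) = c) :
    ∀ θ₁ θ₂, h θ₁ = h θ₂ := by
  have hsm : ContDiff ℝ ((⊤:ℕ∞):WithTop ℕ∞) h := hsmooth.of_le (by simp)
  obtain ⟨hd, hsmooth'⟩ := contDiff_infty_iff_deriv.mp hsm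
  obtain ⟨hd', _⟩ := contDiff_infty_iff_deriv.mp hsmooth'
  -- the conserved quantity
  set F : ℝ → ℝ := fun θ => Real.exp (-((deriv h θ)^2 + (h θ)^2)/2) + c * h θ with hF
  have hFderiv : ∀ θ, HasDerivAt F 0 θ := by
    intro θ
    have hh : HasDerivAt h (deriv h θ) θ := (hd θ).hasDerivAt
    have hh' : HasDerivAt (deriv h) (deriv (deriv h) θ) θ := (hd' θ).hasDerivAt
    have hin : HasDerivAt (fun θ => -((deriv h θ)^2 + (h θ)^2)/2)
        (-(2 * deriv h θ * deriv (deriv h) θ + 2 * h θ * deriv h θ)/2) θ := by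
      have := (((hh'.pow 2).add (hh.pow 2)).neg.div_const 2)
      exact this.congr_deriv (by ring)
    have hexp : HasDerivAt (fun θ => Real.exp (-((deriv h θ)^2 + (h θ)^2)/2))
        (Real.exp (-((deriv h θ)^2 + (h θ)^2)/2) *
          (-(2 * deriv h θ * deriv (deriv h) θ + 2 * h θ * deriv h θ)/2)) θ :=
      (Real.hasDerivAt_exp _).comp θ hin
    have hc' : HasDerivAt (fun θ => c * h θ) (c * deriv h θ) θ := hh.const_mul c
    have hsum := hexp.add hc'
    have : Real.exp (-((deriv h θ)^2 + (h θ)^2)/2) *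
          (-(2 * deriv h θ * deriv (deriv h) θ + 2 * h θ * deriv h θ)/2) + c * deriv h θ = 0 := by
      linear_combination (- deriv h θ) * hode θ
    rwa [this] at hsum
  have hFconst : ∀ x y, F x = F y :=
    is_const_of_deriv_eq_zero (fun θ => (hFderiv θ).differentiableAt)
      (fun θ => (hFderiv θ).deriv)
  -- max and min of h
  have h2pi : (0:ℝ) < 2 * Real.pi := by positivity
  have hIcc : (Set.Icc (0:ℝ) (2 * Real.pi)).Nonempty := ⟨0, by constructor <;> linarith⟩
  obtain ⟨m, _, hm⟩ := isCompact_Icc.exists_isMaxOn hIcc hd.continuous.continuousOn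
  obtain ⟨p, _, hp⟩ := isCompact_Icc.exists_isMinOn hIcc hd.continuous.continuousOn
  have hmax : ∀ θ, h θ ≤ h m := by
    intro θ
    obtain ⟨y, hy, hxy⟩ := hper.exists_mem_Ico₀ h2pi θ
    rw [hxy]; exact hm (Set.Ico_subset_Icc_self hy)
  have hmin : ∀ θ, h p ≤ h θ := by
    intro θ
    obtain ⟨y, hy, hxy⟩ := hper.exists_mem_Ico₀ h2pi θ
    rw [hxy]; exact hp (Set.Ico_subset_Icc_self hy)
  have hdm : deriv h m = 0 :=
    (IsLocalMax.deriv_eq_zero (Filter.Eventually.of_forall hmax))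
  have hdp : deriv h p = 0 := by
    have : IsLocalMax (fun θ => -h θ) p := Filter.Eventually.of_forall (fun θ => by simpa using hmin θ)
    have h0 := this.deriv_eq_zero
    have : deriv (fun θ => -h θ) p = - deriv h p := deriv.neg
    rw [this] at h0; linarith
  set a := h m with ha
  set b := h p with hb
  have hba : b ≤ a := hmin m
  have hbnn : 0 ≤ b := hnonneg p
  -- u a = u b
  set u : ℝ → ℝ := fun y => Real.exp (-y^2/2) + c * y with hu
  have hua : u a = u b := by
    have := hFconst m p
    simp only [hF, hdm, hdp] at this
    simp only [hu]
    convert this using 3 <;> ring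
  -- u is monotone on [b, a], in fact a = b
  have hab : a = b := by
    by_contra hne
    have hlt : b < a := lt_of_le_of_ne hba (Ne.symm hne)
    have hmono : MonotoneOn u (Set.Icc b a) := by
      apply monotoneOn_of_deriv_nonneg (convex_Icc b a)
      · exact fun x _ => ((aux_u_deriv c x).differentiableAt).continuousAt.continuousWithinAt
      · exact fun x _ => ((aux_u_deriv c x).differentiableAt).differentiableWithinAt
      · intro x hx
        rw [(aux_u_deriv c x).deriv]
        rw [interior_Icc] at hx
        have hx0 : 0 ≤ x := le_trans hbnn hx.1.le
        have := aux_key_bound' hx0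
        linarith
    have hconstu : ∀ x ∈ Set.Icc b a, u x = u b := by
      intro x hx
      have h1 : u b ≤ u x := hmono (Set.left_mem_Icc.mpr hba) hx hx.1
      have h2 : u x ≤ u a := hmono hx (Set.right_mem_Icc.mpr hba) hx.2
      rw [hua] at h2
      linarith
    -- pick a point in (b,a) different from 1
    obtain ⟨x₀, hx₀, hx₀1⟩ : ∃ x₀, x₀ ∈ Set.Ioo b a ∧ x₀ ≠ 1 := by
      rcases eq_or_ne ((b + a)/2) 1 with he | hne'
      · refine ⟨(3*b + a)/4, ⟨by linarith, by linarith⟩, ?_⟩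
        intro hcon
        rw [← he] at hcon
        have : b = a := by linarith
        exact hne this.symm
      · exact ⟨(b + a)/2, ⟨by linarith, by linarith⟩, hne'⟩
    have hnhds : Set.Icc b a ∈ nhds x₀ :=
      Filter.mem_of_superset (isOpen_Ioo.mem_nhds hx₀) Set.Ioo_subset_Icc_self
    have heq : u =ᶠ[nhds x₀] (fun _ => u b) :=
      Filter.eventuallyEq_of_mem hnhds hconstu
    have hd0 : deriv u x₀ = 0 := by
      rw [heq.deriv_eq, deriv_const]
    have hx₀0 : 0 ≤ x₀ := le_trans hbnn hx₀.1.le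
    have hpos : 0 < deriv u x₀ := by
      rw [(aux_u_deriv c x₀).deriv]
      have := aux_key_bound hx₀0 hx₀1
      linarith
    linarith
  intro θ₁ θ₂
  have e1 : h θ₁ = a := le_antisymm (hmax θ₁) (hab ▸ hmin θ₁)
  have e2 : h θ₂ = a := le_antisymm (hmax θ₂) (hab ▸ hmin θ₂)
  rw [e1, e2]
end

section
/- Let 0 < c < e^{-1/2}, let m₁ < 1 < m₂ be the two positive solutions of t·e^{-t²/2} = c, and let h be a nonnegative nonconstant smooth solution on S¹ of e^{-(h'²+h²)/2}(h''+h) = c with minimum value h₀ and maximum value h₁. Then h₀ < m₁ < h₁ ≤ m₂. -/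
open Real

lemma psi_hasDeriv (x : ℝ) :
    HasDerivAt (fun t : ℝ => t * Real.exp (-t^2/2)) ((1 - x^2) * Real.exp (-x^2/2)) x := by
  have h1 : HasDerivAt (fun t : ℝ => -t^2/2) (-x) x := by
    have := ((hasDerivAt_id x).pow 2).neg.div_const 2
    simpa using this.congr_deriv (by simp only [id_eq]; push_cast; ring)
  have h3 := (hasDerivAt_id x).mul h1.exp
  refine h3.congr_deriv ?_
  simp only [id_eq]; ring

lemma phi_hasDeriv (c x : ℝ) :
    HasDerivAt (fun t : ℝ => c * t + Real.exp (-t^2/2)) (c - x * Real.exp (-x^2/2)) x := by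
  have h1 : HasDerivAt (fun t : ℝ => -t^2/2) (-x) x := by
    have := ((hasDerivAt_id x).pow 2).neg.div_const 2
    simpa using this.congr_deriv (by simp only [id_eq]; push_cast; ring)
  have := ((hasDerivAt_id x).const_mul c).add h1.exp
  refine this.congr_deriv ?_
  ring

lemma psi_mono : StrictMonoOn (fun t : ℝ => t * Real.exp (-t^2/2)) (Set.Icc 0 1) := by
  apply strictMonoOn_of_deriv_pos (convex_Icc 0 1)
  · exact (continuous_id.mul (Real.continuous_exp.comp (by continuity))).continuousOn
  · intro x hx
    rw [interior_Icc] at hx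
    rw [(psi_hasDeriv x).deriv]
    have : 0 < 1 - x^2 := by nlinarith [hx.1, hx.2]
    positivity

lemma psi_anti : StrictAntiOn (fun t : ℝ => t * Real.exp (-t^2/2)) (Set.Ici 1) := by
  apply strictAntiOn_of_deriv_neg (convex_Ici 1)
  · exact (continuous_id.mul (Real.continuous_exp.comp (by continuity))).continuousOn
  · intro x hx
    rw [interior_Ici] at hx
    rw [(psi_hasDeriv x).deriv]
    have h1 : 1 - x^2 < 0 := by nlinarith [Set.mem_Ioi.mp hx]
    have := Real.exp_pos (-x^2/2)
    nlinarith

section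
variable (c m₁ m₂ : ℝ) (hc0 : 0 < c) (hm₁0 : 0 < m₁) (hm₁1 : m₁ < 1) (hm₂1 : 1 < m₂)
  (hm₁ : m₁ * Real.exp (-m₁^2/2) = c) (hm₂ : m₂ * Real.exp (-m₂^2/2) = c)

lemma phi_cont : Continuous (fun t : ℝ => c * t + Real.exp (-t^2/2)) := by
  exact (continuous_const.mul continuous_id).add (Real.continuous_exp.comp (by continuity))

include hm₁0 hm₁1 hm₁ in
lemma phi_mono1 : StrictMonoOn (fun t : ℝ => c * t + Real.exp (-t^2/2)) (Set.Icc 0 m₁) := by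
  apply strictMonoOn_of_deriv_pos (convex_Icc 0 m₁) (phi_cont c).continuousOn
  intro x hx
  rw [interior_Icc] at hx
  rw [(phi_hasDeriv c x).deriv, sub_pos, ← hm₁]
  exact psi_mono ⟨hx.1.le, by linarith [hx.2]⟩ ⟨hm₁0.le, hm₁1.le⟩ hx.2

include hm₁0 hm₁1 hm₂1 hm₁ hm₂ in
lemma phi_anti : StrictAntiOn (fun t : ℝ => c * t + Real.exp (-t^2/2)) (Set.Icc m₁ m₂) := by
  apply strictAntiOn_of_deriv_neg (convex_Icc m₁ m₂) (phi_cont c).continuousOn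
  intro x hx
  rw [interior_Icc] at hx
  rw [(phi_hasDeriv c x).deriv, sub_neg]
  rcases le_or_gt x 1 with hx1 | hx1
  · rw [← hm₁]; exact psi_mono ⟨hm₁0.le, hm₁1.le⟩ ⟨by linarith [hx.1, hm₁0], hx1⟩ hx.1
  · rw [← hm₂]; exact psi_anti (Set.mem_Ici.mpr hx1.le) (Set.mem_Ici.mpr hm₂1.le) hx.2

include hm₂1 hm₂ in
lemma phi_mono2 : StrictMonoOn (fun t : ℝ => c * t + Real.exp (-t^2/2)) (Set.Ici m₂) := by
  apply strictMonoOn_of_deriv_pos (convex_Ici m₂) (phi_cont c).continuousOn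
  intro x hx
  rw [interior_Ici] at hx
  rw [(phi_hasDeriv c x).deriv, sub_pos, ← hm₂]
  exact psi_anti (Set.mem_Ici.mpr hm₂1.le) (Set.mem_Ici.mpr (by linarith [Set.mem_Ioi.mp hx])) hx

end

theorem stmt6 (c : ℝ) (hc0 : 0 < c) (hc1 : c < Real.exp (-1/2))
    (m₁ m₂ : ℝ) (hm₁0 : 0 < m₁) (hm₁1 : m₁ < 1) (hm₂1 : 1 < m₂)
    (hm₁ : m₁ * Real.exp (-m₁^2/2) = c) (hm₂ : m₂ * Real.exp (-m₂^2/2) = c)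
    (h : ℝ → ℝ)
    (hper : Function.Periodic h (2 * Real.pi))
    (hsmooth : ContDiff ℝ (⊤ : ℕ∞) h)
    (hnonneg : ∀ θ, 0 ≤ h θ)
    (hnonconst : ∃ θ₁ θ₂, h θ₁ ≠ h θ₂)
    (hode : ∀ θ, Real.exp (-((deriv h θ)^2 + (h θ)^2)/2) * (deriv (deriv h) θ + h θ) = c)
    (h₀ h₁ : ℝ)
    (hmin : IsLeast (Set.range h) h₀)
    (hmax : IsGreatest (Set.range h) h₁) :
    h₀ < m₁ ∧ m₁ < h₁ ∧ h₁ ≤ m₂ := by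
  obtain ⟨θ₀, hθ₀⟩ := hmin.1
  obtain ⟨θ₁, hθ₁⟩ := hmax.1
  have hd : Differentiable ℝ h := hsmooth.differentiable (by simp)
  have hd2 : Differentiable ℝ (deriv h) :=
    (contDiff_infty_iff_deriv.mp (hsmooth.of_le (by simp))).2.differentiable (by simp)
  set φ : ℝ → ℝ := fun t => c * t + Real.exp (-t^2/2) with hφ
  set E : ℝ → ℝ := fun θ => c * h θ + Real.exp (-((deriv h θ)^2 + (h θ)^2)/2) with hE
  -- E is constant
  have hE' : ∀ θ, HasDerivAt E 0 θ := by
    intro θ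
    have h1 : HasDerivAt h (deriv h θ) θ := (hd θ).hasDerivAt
    have h2 : HasDerivAt (deriv h) (deriv (deriv h) θ) θ := (hd2 θ).hasDerivAt
    have hg : HasDerivAt (fun θ => -((deriv h θ)^2 + (h θ)^2)/2)
        (-(2 * deriv h θ * deriv (deriv h) θ + 2 * h θ * deriv h θ)/2) θ := by
      have := (((h2.pow 2).add (h1.pow 2)).neg.div_const 2)
      simpa using this.congr_deriv (by push_cast; ring)
    have := (h1.const_mul c).add hg.exp
    refine this.congr_deriv ?_
    have key := hode θ
    linear_combination (-(deriv h θ)) * key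
  have hEconst : ∀ θ θ', E θ = E θ' :=
    is_const_of_deriv_eq_zero (fun x => (hE' x).differentiableAt) (fun x => (hE' x).deriv)
  -- deriv vanishes at extrema
  have hld0 : deriv h θ₀ = 0 := by
    have : IsLocalMin h θ₀ :=
      Filter.Eventually.of_forall (fun x => by rw [hθ₀]; exact hmin.2 ⟨x, rfl⟩)
    exact this.deriv_eq_zero
  have hld1 : deriv h θ₁ = 0 := by
    have : IsLocalMax h θ₁ :=
      Filter.Eventually.of_forall (fun x => by rw [hθ₁]; exact hmax.2 ⟨x, rfl⟩)
    exact this.deriv_eq_zero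
  have hE0 : E θ₀ = φ h₀ := by simp [hE, hφ, hld0, hθ₀]
  have hE1 : E θ₁ = φ h₁ := by simp [hE, hφ, hld1, hθ₁]
  have key1 : φ h₀ = φ h₁ := by rw [← hE0, ← hE1]; exact hEconst θ₀ θ₁
  have keyle : ∀ θ, φ h₁ ≤ φ (h θ) := by
    intro θ
    have h1 : E θ ≤ φ (h θ) := by
      have : Real.exp (-((deriv h θ)^2 + (h θ)^2)/2) ≤ Real.exp (-(h θ)^2/2) :=
        Real.exp_le_exp.mpr (by nlinarith [sq_nonneg (deriv h θ)])
      simpa [hE, hφ] using this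
    calc φ h₁ = E θ := by rw [← hE1]; exact hEconst θ₁ θ
    _ ≤ φ (h θ) := h1
  have h00 : 0 ≤ h₀ := hθ₀ ▸ hnonneg θ₀
  have h01 : h₀ ≤ h₁ := hmax.2 hmin.1
  have hlt : h₀ < h₁ := by
    rcases lt_or_eq_of_le h01 with h' | h'
    · exact h'
    · exfalso
      obtain ⟨θa, θb, hne⟩ := hnonconst
      have ha : h θa = h₀ := le_antisymm (h' ▸ hmax.2 ⟨θa, rfl⟩) (hmin.2 ⟨θa, rfl⟩)
      have hb : h θb = h₀ := le_antisymm (h' ▸ hmax.2 ⟨θb, rfl⟩) (hmin.2 ⟨θb, rfl⟩)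
      exact hne (ha.trans hb.symm)
  have M1 := phi_mono1 c m₁ hm₁0 hm₁1 hm₁
  have M2 := phi_anti c m₁ m₂ hm₁0 hm₁1 hm₂1 hm₁ hm₂
  have M3 := phi_mono2 c m₂ hm₂1 hm₂
  -- h₁ ≤ m₂
  have Hm2 : h₁ ≤ m₂ := by
    by_contra h'
    push_neg at h'
    rcases le_or_gt h₀ m₂ with hh | hh
    · have hmem : m₂ ∈ Set.uIcc (h θ₀) (h θ₁) := by
        rw [hθ₀, hθ₁, Set.uIcc_of_le h01]; exact ⟨hh, h'.le⟩
      obtain ⟨θm, _, hθm⟩ := intermediate_value_uIcc (hd.continuous.continuousOn) hmem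
      have := keyle θm
      rw [hθm] at this
      have h2 := M3 (Set.mem_Ici.mpr le_rfl) (Set.mem_Ici.mpr h'.le) h'
      rw [← hφ] at h2
      linarith
    · have := M3 (Set.mem_Ici.mpr hh.le) (Set.mem_Ici.mpr (by linarith)) hlt
      rw [← hφ] at this
      linarith [key1.le, key1.ge]
  -- m₁ < h₁
  have Hm1 : m₁ < h₁ := by
    by_contra h'
    push_neg at h'
    have := M1 ⟨h00, by linarith⟩ ⟨by linarith, h'⟩ hlt
    rw [← hφ] at this
    linarith [key1.le]
  -- h₀ < m₁
  have H0 : h₀ < m₁ := by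
    by_contra h'
    push_neg at h'
    have := M2 ⟨h', by linarith⟩ ⟨by linarith, Hm2⟩ hlt
    rw [← hφ] at this
    linarith [key1.le]
  exact ⟨H0, Hm1, Hm2⟩
end

section
/- Let 0 < c < e^{-1/2} and let h be a nonnegative, nonconstant smooth solution on S¹ of e^{-(h'²+h²)/2}(h''+h) = c. Then every critical point of h is either a global minimum point or a global maximum point of h. -/
open Real

theorem stmt7 (c : ℝ) (hc0 : 0 < c) (hc1 : c < Real.exp (-1/2)) (h : ℝ → ℝ)
    (hper : Function.Periodic h (2 * Real.pi))
    (hsmooth : ContDiff ℝ (⊤ : ℕ∞) h)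
    (hnonneg : ∀ θ, 0 ≤ h θ)
    (hnonconst : ∃ θ₁ θ₂, h θ₁ ≠ h θ₂)
    (hode : ∀ θ, Real.exp (-((deriv h θ)^2 + (h θ)^2)/2) * (deriv (deriv h) θ + h θ) = c) :
    ∀ θ₀, deriv h θ₀ = 0 →
      (∀ θ, h θ₀ ≤ h θ) ∨ (∀ θ, h θ ≤ h θ₀) := by
  have hd1 : Differentiable ℝ h := hsmooth.differentiable (by simp)
  have hsm' : ContDiff ℝ (⊤ : ℕ∞) h := hsmooth.of_le (by simp)
  have hsd : ContDiff ℝ (⊤ : ℕ∞) (deriv h) := (contDiff_infty_iff_deriv.mp hsm').2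
  have hd2 : Differentiable ℝ (deriv h) := hsd.differentiable (by simp)
  set f : ℝ → ℝ := fun x => Real.exp (-x ^ 2 / 2) + c * x with hf
  set φ : ℝ → ℝ := fun θ => Real.exp (-((deriv h θ) ^ 2 + (h θ) ^ 2) / 2) + c * h θ with hφ
  -- f has derivative c - x * exp(-x²/2)
  have hfd : ∀ x : ℝ, HasDerivAt f (c - x * Real.exp (-x ^ 2 / 2)) x := by
    intro x
    have h1 : HasDerivAt (fun x : ℝ => -x ^ 2 / 2) (-x) x := by
      have := ((hasDerivAt_pow 2 x).neg).div_const 2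
      refine HasDerivAt.congr_deriv this ?_; ring
    have h2 : HasDerivAt (fun x : ℝ => Real.exp (-x ^ 2 / 2))
        (Real.exp (-x ^ 2 / 2) * (-x)) x := (Real.hasDerivAt_exp _).comp x h1
    have h3 : HasDerivAt (fun x : ℝ => c * x) c x := by
      simpa using (hasDerivAt_id x).const_mul c
    refine HasDerivAt.congr_deriv (h2.add h3) ?_; ring
  -- the auxiliary function g
  set g : ℝ → ℝ := fun x => x * Real.exp (-x ^ 2 / 2) with hg
  have hgd : ∀ x : ℝ, HasDerivAt g ((1 - x ^ 2) * Real.exp (-x ^ 2 / 2)) x := by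
    intro x
    have h1 : HasDerivAt (fun x : ℝ => -x ^ 2 / 2) (-x) x := by
      have := ((hasDerivAt_pow 2 x).neg).div_const 2
      refine HasDerivAt.congr_deriv this ?_; ring
    have h2 : HasDerivAt (fun x : ℝ => Real.exp (-x ^ 2 / 2))
        (Real.exp (-x ^ 2 / 2) * (-x)) x := (Real.hasDerivAt_exp _).comp x h1
    have := (hasDerivAt_id x).mul h2
    refine HasDerivAt.congr_deriv this ?_
    simp only [id_eq]
    ring
  -- g strictly monotone on [0,1], strictly anti on [1,∞)
  have hgmono : StrictMonoOn g (Set.Icc (0 : ℝ) 1) := by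
    apply strictMonoOn_of_deriv_pos (convex_Icc _ _)
      (fun x _ => (hgd x).continuousAt.continuousWithinAt)
    intro x hx
    rw [interior_Icc] at hx
    rw [(hgd x).deriv]
    have : 0 < 1 - x ^ 2 := by nlinarith [hx.1, hx.2]
    positivity
  have hganti : StrictAntiOn g (Set.Ici (1 : ℝ)) := by
    apply strictAntiOn_of_deriv_neg (convex_Ici _)
      (fun x _ => (hgd x).continuousAt.continuousWithinAt)
    intro x hx
    rw [interior_Ici] at hx
    rw [(hgd x).deriv]
    have h1 : 1 - x ^ 2 < 0 := by nlinarith [Set.mem_Ioi.mp hx]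
    have h2 : 0 < Real.exp (-x ^ 2 / 2) := Real.exp_pos _
    nlinarith
  -- φ is constant
  have hφconst : ∀ θ θ', φ θ = φ θ' := by
    have hderiv : ∀ θ, HasDerivAt φ 0 θ := by
      intro θ
      have hh : HasDerivAt h (deriv h θ) θ := (hd1 θ).hasDerivAt
      have hh' : HasDerivAt (deriv h) (deriv (deriv h) θ) θ := (hd2 θ).hasDerivAt
      have h1 : HasDerivAt (fun t => -((deriv h t) ^ 2 + (h t) ^ 2) / 2)
          (-(2 * deriv h θ * deriv (deriv h) θ + 2 * h θ * deriv h θ) / 2) θ := by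
        have := (((hh'.pow 2).add (hh.pow 2)).neg).div_const 2
        refine HasDerivAt.congr_deriv this ?_
        ring
      have h2 : HasDerivAt (fun t => Real.exp (-((deriv h t) ^ 2 + (h t) ^ 2) / 2))
          (Real.exp (-((deriv h θ) ^ 2 + (h θ) ^ 2) / 2) *
            (-(2 * deriv h θ * deriv (deriv h) θ + 2 * h θ * deriv h θ) / 2)) θ :=
        (Real.hasDerivAt_exp _).comp θ h1
      have h3 : HasDerivAt (fun t => c * h t) (c * deriv h θ) θ := hh.const_mul c
      have := h2.add h3
      refine HasDerivAt.congr_deriv this ?_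
      have hodeθ := hode θ
      linear_combination (-(deriv h θ)) * hodeθ
    intro θ θ'
    exact is_const_of_deriv_eq_zero (fun x => (hderiv x).differentiableAt)
      (fun x => (hderiv x).deriv) θ θ'
  set E : ℝ := φ 0 with hE
  -- at a critical point, f (h θ) = E
  have hcrit : ∀ θ, deriv h θ = 0 → f (h θ) = E := by
    intro θ hθ
    have h1 : φ θ = E := hφconst θ 0
    rw [← h1]
    simp only [hφ, hf, hθ]
    ring_nf
  -- everywhere, E ≤ f (h θ)
  have hle : ∀ θ, E ≤ f (h θ) := by
    intro θ
    have h1 : φ θ = E := hφconst θ 0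
    rw [← h1]
    have h2 : Real.exp (-((deriv h θ) ^ 2 + (h θ) ^ 2) / 2) ≤ Real.exp (-(h θ) ^ 2 / 2) :=
      Real.exp_le_exp.mpr (by nlinarith [sq_nonneg (deriv h θ)])
    simp only [hφ, hf]
    linarith
  -- existence of global min and max
  have hcont : Continuous h := hd1.continuous
  have h2pi : (0 : ℝ) < 2 * Real.pi := by positivity
  obtain ⟨θm, _, hθm⟩ := (isCompact_Icc (a := (0:ℝ)) (b := 2 * Real.pi)).exists_isMinOn
    (Set.nonempty_Icc.mpr (by linarith)) hcont.continuousOn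
  obtain ⟨θM, _, hθM⟩ := (isCompact_Icc (a := (0:ℝ)) (b := 2 * Real.pi)).exists_isMaxOn
    (Set.nonempty_Icc.mpr (by linarith)) hcont.continuousOn
  have hmin : ∀ θ, h θm ≤ h θ := by
    intro θ
    obtain ⟨y, hy, hxy⟩ := hper.exists_mem_Ico₀ h2pi θ
    rw [hxy]
    exact hθm (Set.mem_Icc.mpr ⟨hy.1, le_of_lt (lt_of_lt_of_le hy.2 le_rfl)⟩)
  have hmax : ∀ θ, h θ ≤ h θM := by
    intro θ
    obtain ⟨y, hy, hxy⟩ := hper.exists_mem_Ico₀ h2pi θ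
    rw [hxy]
    exact hθM (Set.mem_Icc.mpr ⟨hy.1, le_of_lt (lt_of_lt_of_le hy.2 le_rfl)⟩)
  have hdm : deriv h θm = 0 :=
    IsLocalMin.deriv_eq_zero (Filter.Eventually.of_forall hmin)
  have hdM : deriv h θM = 0 :=
    IsLocalMax.deriv_eq_zero (Filter.Eventually.of_forall hmax)
  set m := h θm with hm
  set M := h θM with hM
  have hfm : f m = E := hcrit θm hdm
  have hfM : f M = E := hcrit θM hdM
  have hm0 : 0 ≤ m := hnonneg θm
  -- every value in [m, M] is attained, hence E ≤ f x there
  have hfE : ∀ x ∈ Set.Icc m M, E ≤ f x := by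
    intro x hx
    have hsub : Set.uIcc m M ⊆ h '' Set.uIcc θm θM :=
      intermediate_value_uIcc hcont.continuousOn
    have hx' : x ∈ Set.uIcc m M := by
      rw [Set.uIcc_of_le (hmin θM)]; exact hx
    obtain ⟨θ, _, hθ⟩ := hsub hx'
    rw [← hθ]
    exact hle θ
  intro θ₀ hθ₀
  set μ := h θ₀ with hμ
  have hfμ : f μ = E := hcrit θ₀ hθ₀
  by_cases hc1' : μ ≤ m
  · left; intro θ; exact le_trans hc1' (hmin θ)
  by_cases hc2' : M ≤ μ
  · right; intro θ; exact le_trans (hmax θ) hc2'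
  push_neg at hc1' hc2'
  exfalso
  -- now m < μ < M; derive a contradiction
  have hfcont : Continuous f := by
    rw [hf]; continuity
  -- Rolle between m and μ
  obtain ⟨ξ₁, hξ₁mem, hξ₁⟩ := exists_deriv_eq_zero hc1' hfcont.continuousOn
    (hfm.trans hfμ.symm)
  -- Rolle between μ and M
  obtain ⟨ξ₂, hξ₂mem, hξ₂⟩ := exists_deriv_eq_zero hc2' hfcont.continuousOn
    (hfμ.trans hfM.symm)
  -- μ is a local min of f
  have hμloc : IsLocalMin f μ := by
    have hmem : Set.Ioo m M ∈ nhds μ := Ioo_mem_nhds hc1' hc2'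
    filter_upwards [hmem] with x hx
    rw [hfμ]
    exact hfE x (Set.mem_Icc.mpr ⟨le_of_lt hx.1, le_of_lt hx.2⟩)
  have hμd : deriv f μ = 0 := hμloc.deriv_eq_zero
  -- convert to statements about g
  have hgval : ∀ x : ℝ, deriv f x = 0 → g x = c := by
    intro x hx
    have := (hfd x).deriv
    rw [hx] at this
    rw [hg]; simp only; linarith
  have hgξ₁ : g ξ₁ = c := hgval ξ₁ hξ₁
  have hgξ₂ : g ξ₂ = c := hgval ξ₂ hξ₂
  have hgμ : g μ = c := hgval μ hμd
  have hξ₁0 : 0 ≤ ξ₁ := le_of_lt (lt_of_le_of_lt hm0 hξ₁mem.1)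
  by_cases hμ1 : μ ≤ 1
  · have := hgmono (Set.mem_Icc.mpr ⟨hξ₁0, le_trans (le_of_lt hξ₁mem.2) hμ1⟩)
      (Set.mem_Icc.mpr ⟨le_trans hξ₁0 (le_of_lt hξ₁mem.2), hμ1⟩) hξ₁mem.2
    rw [hgξ₁, hgμ] at this
    exact lt_irrefl c this
  · push_neg at hμ1
    have := hganti (Set.mem_Ici.mpr (le_of_lt hμ1))
      (Set.mem_Ici.mpr (le_of_lt (lt_trans hμ1 hξ₂mem.1))) hξ₂mem.1
    rw [hgξ₂, hgμ] at this
    exact lt_irrefl c this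
end

section
/- Let 0 < c < e^{-1/2} and let h be a nonnegative, nonconstant smooth solution on S¹ of e^{-(h'²+h²)/2}(h''+h) = c, with minimum point θ₀ and the nearest maximum point θ₁ > θ₀. Then θ₁ − θ₀ = ∫₀¹ r / √( −(t·r + h₀)² − 2·log(e^{−h₀²/2} − c·t·r) ) dt, where h₀ = h(θ₀) and r = h(θ₁) − h(θ₀). -/
open Real
open scoped ContDiff

theorem stmt9 (c : ℝ) (hc0 : 0 < c) (hc1 : c < Real.exp (-1/2)) (h : ℝ → ℝ)
    (hper : Function.Periodic h (2 * Real.pi))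
    (hsmooth : ContDiff ℝ (⊤ : ℕ∞) h)
    (hnonneg : ∀ θ, 0 ≤ h θ)
    (hnonconst : ∃ θ₁ θ₂, h θ₁ ≠ h θ₂)
    (hode : ∀ θ, Real.exp (-((deriv h θ)^2 + (h θ)^2)/2) * (deriv (deriv h) θ + h θ) = c)
    (θ₀ θ₁ : ℝ) (hlt : θ₀ < θ₁)
    (hmin : ∀ θ, h θ₀ ≤ h θ)
    (hmax : ∀ θ, h θ ≤ h θ₁)
    (hmono : ∀ θ ∈ Set.Ioo θ₀ θ₁, 0 < deriv h θ) :
    θ₁ - θ₀ = ∫ t in (0:ℝ)..1,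
      (h θ₁ - h θ₀) / Real.sqrt (-(t * (h θ₁ - h θ₀) + h θ₀)^2
        - 2 * Real.log (Real.exp (-(h θ₀)^2/2) - c * t * (h θ₁ - h θ₀))) := by
  have hinf : ContDiff ℝ ∞ h := hsmooth.of_le (by simp)
  have h1le : (1 : WithTop ℕ∞) ≤ ∞ := by
    exact_mod_cast (le_top : (1:ℕ∞) ≤ ⊤)
  have hdiff : Differentiable ℝ h := hinf.differentiable (zero_lt_one.trans_le h1le).ne'
  have hd1 : ContDiff ℝ ∞ (deriv h) := (contDiff_infty_iff_deriv.mp hinf).2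
  have hdiff' : Differentiable ℝ (deriv h) := hd1.differentiable (zero_lt_one.trans_le h1le).ne'
  set E : ℝ := Real.exp (-(h θ₀)^2/2) + c * h θ₀ with hE
  have hr0 : 0 < h θ₁ - h θ₀ := by
    obtain ⟨a, b, hab⟩ := hnonconst
    rcases lt_or_ge (h θ₀) (h θ₁) with H | H
    · linarith
    · have ha : h a = h θ₀ := le_antisymm (le_trans (hmax a) H) (hmin a)
      have hb : h b = h θ₀ := le_antisymm (le_trans (hmax b) H) (hmin b)
      exact absurd (ha.trans hb.symm) hab
  have hd0 : deriv h θ₀ = 0 := by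
    have hloc : IsLocalMin h θ₀ := Filter.Eventually.of_forall hmin
    exact hloc.deriv_eq_zero
  -- conserved quantity
  have hF : ∀ θ, HasDerivAt
      (fun θ => Real.exp (-((deriv h θ)^2 + (h θ)^2)/2) + c * h θ) 0 θ := by
    intro θ
    have H1 : HasDerivAt h (deriv h θ) θ := (hdiff θ).hasDerivAt
    have H2 : HasDerivAt (deriv h) (deriv (deriv h) θ) θ := (hdiff' θ).hasDerivAt
    have Hu : HasDerivAt (fun θ => -((deriv h θ)^2 + (h θ)^2)/2)
        (-((2:ℕ) * deriv h θ ^ (2-1) * deriv (deriv h) θ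
          + (2:ℕ) * h θ ^ (2-1) * deriv h θ)/2) θ :=
      (((H2.pow 2).add (H1.pow 2)).neg).div_const 2
    have Hexp := Hu.exp
    have Htot := Hexp.add (H1.const_mul c)
    refine Htot.congr_deriv ?_
    push_cast
    linear_combination -(deriv h θ) * hode θ
  have key : ∀ θ, Real.exp (-((deriv h θ)^2 + (h θ)^2)/2) + c * h θ = E := by
    intro θ
    have hc : ∀ x y : ℝ, (fun θ => Real.exp (-((deriv h θ)^2 + (h θ)^2)/2) + c * h θ) x
        = (fun θ => Real.exp (-((deriv h θ)^2 + (h θ)^2)/2) + c * h θ) y :=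
      is_const_of_deriv_eq_zero (fun x => (hF x).differentiableAt) (fun x => (hF x).deriv)
    have := hc θ θ₀
    simp only at this
    rw [this, hd0, hE]
    norm_num
  have key2 : ∀ θ, (deriv h θ)^2 = -(h θ)^2 - 2 * Real.log (E - c * h θ) := by
    intro θ
    have h1 : E - c * h θ = Real.exp (-((deriv h θ)^2 + (h θ)^2)/2) := by
      linarith [key θ]
    rw [h1, Real.log_exp]; ring
  -- strict monotonicity and image
  have hsm : StrictMonoOn h (Set.Icc θ₀ θ₁) :=
    strictMonoOn_of_deriv_pos (convex_Icc _ _) hsmooth.continuous.continuousOn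
      (fun x hx => hmono x (by rwa [interior_Icc] at hx))
  have himg : h '' Set.Ioo θ₀ θ₁ = Set.Ioo (h θ₀) (h θ₁) := by
    apply Set.Subset.antisymm
    · rintro _ ⟨x, hx, rfl⟩
      exact ⟨hsm (Set.left_mem_Icc.mpr hlt.le) (Set.Ioo_subset_Icc_self hx) hx.1,
             hsm (Set.Ioo_subset_Icc_self hx) (Set.right_mem_Icc.mpr hlt.le) hx.2⟩
    · exact intermediate_value_Ioo hlt.le hsmooth.continuous.continuousOn
  set G : ℝ → ℝ := fun u => 1 / Real.sqrt (-u^2 - 2 * Real.log (E - c * u)) with hG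
  -- change of variables u = h θ
  have hcv : ∫ u in Set.Ioo (h θ₀) (h θ₁), G u
      = ∫ x in Set.Ioo θ₀ θ₁, |deriv h x| • G (h x) := by
    rw [← himg]
    exact MeasureTheory.integral_image_eq_integral_abs_deriv_smul measurableSet_Ioo
      (fun x _ => (hdiff x).hasDerivAt.hasDerivWithinAt)
      (hsm.injOn.mono Set.Ioo_subset_Icc_self) G
  have hone : Set.EqOn (fun x => |deriv h x| • G (h x)) (fun _ => (1:ℝ)) (Set.Ioo θ₀ θ₁) := by
    intro x hx
    have hpos := hmono x hx
    have hsq : Real.sqrt (-(h x)^2 - 2 * Real.log (E - c * h x)) = deriv h x := by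
      rw [← key2 x, Real.sqrt_sq hpos.le]
    simp only [hG, smul_eq_mul, hsq, abs_of_pos hpos]
    field_simp
  have hioo : ∫ x in Set.Ioo θ₀ θ₁, |deriv h x| • G (h x) = θ₁ - θ₀ := by
    rw [MeasureTheory.setIntegral_congr_fun measurableSet_Ioo hone,
      MeasureTheory.setIntegral_const, Real.volume_real_Ioo_of_le hlt.le, smul_eq_mul, mul_one]
  have hII : ∫ u in (h θ₀)..(h θ₁), G u = ∫ u in Set.Ioo (h θ₀) (h θ₁), G u := by
    rw [intervalIntegral.integral_of_le (by linarith : h θ₀ ≤ h θ₁), MeasureTheory.integral_Ioc_eq_integral_Ioo]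
  have hsub : (h θ₁ - h θ₀) • ∫ t in (0:ℝ)..1, G ((h θ₁ - h θ₀) * t + h θ₀)
      = ∫ u in (h θ₀)..(h θ₁), G u := by
    have := intervalIntegral.smul_integral_comp_mul_add (a := (0:ℝ)) (b := 1) G
      (h θ₁ - h θ₀) (h θ₀)
    convert this using 2 <;> ring
  have hintegrand : ∀ t : ℝ,
      (h θ₁ - h θ₀) • G ((h θ₁ - h θ₀) * t + h θ₀)
      = (h θ₁ - h θ₀) / Real.sqrt (-(t * (h θ₁ - h θ₀) + h θ₀)^2
        - 2 * Real.log (Real.exp (-(h θ₀)^2/2) - c * t * (h θ₁ - h θ₀))) := by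
    intro t
    have harg : E - c * ((h θ₁ - h θ₀) * t + h θ₀)
        = Real.exp (-(h θ₀)^2/2) - c * t * (h θ₁ - h θ₀) := by
      rw [hE]; ring
    have harg2 : -((h θ₁ - h θ₀) * t + h θ₀)^2 = -(t * (h θ₁ - h θ₀) + h θ₀)^2 := by ring
    simp only [hG, smul_eq_mul, harg, harg2, mul_one_div]
  calc θ₁ - θ₀ = ∫ x in Set.Ioo θ₀ θ₁, |deriv h x| • G (h x) := hioo.symm
    _ = ∫ u in Set.Ioo (h θ₀) (h θ₁), G u := hcv.symm
    _ = ∫ u in (h θ₀)..(h θ₁), G u := hII.symm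
    _ = (h θ₁ - h θ₀) • ∫ t in (0:ℝ)..1, G ((h θ₁ - h θ₀) * t + h θ₀) := hsub.symm
    _ = ∫ t in (0:ℝ)..1, (h θ₁ - h θ₀) • G ((h θ₁ - h θ₀) * t + h θ₀) :=
        (intervalIntegral.integral_smul _ _).symm
    _ = _ := intervalIntegral.integral_congr (fun t _ => hintegrand t)
end

section
/- Let 0 < c < e^{-1/2}. Suppose that there is no pair (h₀, r) with r > 0 such that (h₀, h₀ + r) is a good pair with respect to c and Θ(c, h₀, r) = π/k for some positive integer k, where Θ(c,h₀,r) = ∫₀¹ r / √(−(t·r+h₀)² − 2 log(e^{−h₀²/2} − c·t·r)) dt. Then every nonnegative smooth solution on S¹ of e^{-(h'²+h²)/2}(h''+h) = c is constant. -/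
open Real Filter Topology

/-- A pair `(a, b)` is a good pair with respect to `c`: `φ(a) = φ(b)`, `φ'(a) > 0`,
`φ'(b) ≤ 0`, where `φ(t) = c·t + e^{-t²/2}` and `φ'(t) = c - t·e^{-t²/2}`. -/
def GoodPair (c a b : ℝ) : Prop :=
  a < b ∧ c * a + Real.exp (-a^2/2) = c * b + Real.exp (-b^2/2) ∧
    0 < c - a * Real.exp (-a^2/2) ∧ c - b * Real.exp (-b^2/2) ≤ 0

/-- The integral `Θ(c, h₀, r)`. -/
noncomputable def Theta (c h₀ r : ℝ) : ℝ :=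
  ∫ t in (0:ℝ)..1,
    r / Real.sqrt (-(t * r + h₀)^2 - 2 * Real.log (Real.exp (-h₀^2/2) - c * t * r))

/-- Sturm-type comparison: if `u'' = (w² - 1) u` with `w` continuous and nonvanishing
(positively), and `u` vanishes at `α < β` with `β - α ≤ π` while `u > 0` on `(α, β)`,
we get a contradiction. -/
lemma sturm_gap (w u u' : ℝ → ℝ) (hw : Continuous w) (hwpos : ∀ x, 0 < w x)
    (hu : ∀ x, HasDerivAt u (u' x) x)
    (hu' : ∀ x, HasDerivAt u' ((w x ^ 2 - 1) * u x) x)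
    (α β : ℝ) (hαβ : α < β) (hβα : β - α ≤ π) (hα : u α = 0) (hβ : u β = 0)
    (hpos : ∀ x ∈ Set.Ioo α β, 0 < u x) : False := by
  have hu_cont : Continuous u := by
    rw [continuous_iff_continuousAt]; exact fun x => (hu x).continuousAt
  have hu'_cont : Continuous u' := by
    rw [continuous_iff_continuousAt]; exact fun x => (hu' x).continuousAt
  -- the Wronskian with sin (· - α)
  set W : ℝ → ℝ := fun x => u' x * Real.sin (x - α) - u x * Real.cos (x - α) with hW_def
  have hW : ∀ x, HasDerivAt W (w x ^ 2 * u x * Real.sin (x - α)) x := by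
    intro x
    have hsin : HasDerivAt (fun y : ℝ => Real.sin (y - α)) (Real.cos (x - α)) x := by
      have h1 : HasDerivAt (fun y : ℝ => y - α) 1 x := (hasDerivAt_id x).sub_const α
      simpa using h1.sin
    have hcos : HasDerivAt (fun y : ℝ => Real.cos (y - α)) (-Real.sin (x - α)) x := by
      have h1 : HasDerivAt (fun y : ℝ => y - α) 1 x := (hasDerivAt_id x).sub_const α
      simpa using h1.cos
    have := ((hu' x).mul hsin).sub ((hu x).mul hcos)
    refine this.congr_deriv ?_
    ring
  have hint : IntervalIntegrable (fun x => w x ^ 2 * u x * Real.sin (x - α))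
      MeasureTheory.volume α β := by
    exact (((hw.pow 2).mul hu_cont).mul (Real.continuous_sin.comp
      (continuous_id.sub continuous_const))).intervalIntegrable α β
  have hftc : ∫ x in α..β, w x ^ 2 * u x * Real.sin (x - α) = W β - W α :=
    intervalIntegral.integral_eq_sub_of_hasDerivAt (fun x _ => hW x) hint
  have hWα : W α = 0 := by simp [hW_def, hα]
  -- `u' β ≤ 0` since `u ≥ 0` to the left of `β` and `u β = 0`
  have hu'β : u' β ≤ 0 := by
    have hslope : Filter.Tendsto (slope u β) (𝓝[<] β) (𝓝 (u' β)) := by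
      have := (hasDerivAt_iff_tendsto_slope.mp (hu β))
      exact this.mono_left (nhdsWithin_mono β (fun x hx => by
        simp only [Set.mem_compl_iff, Set.mem_singleton_iff]
        exact ne_of_lt hx))
    refine le_of_tendsto hslope ?_
    filter_upwards [Ioo_mem_nhdsLT_of_mem (Set.mem_Ioc.mpr ⟨hαβ, le_refl β⟩)] with x hx
    have hx' : 0 < u x := hpos x hx
    have hxβ : x - β < 0 := by
      have := hx.2
      simp only [Set.mem_Ioo] at hx
      linarith [hx.2]
    rw [slope_def_field]
    have : (u x - u β) / (x - β) ≤ 0 := by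
      apply div_nonpos_of_nonneg_of_nonpos
      · rw [hβ]; linarith
      · linarith
    simpa [div_eq_inv_mul] using this
  have hWβ : W β ≤ 0 := by
    have hsin_nonneg : 0 ≤ Real.sin (β - α) :=
      Real.sin_nonneg_of_nonneg_of_le_pi (by linarith) hβα
    have : W β = u' β * Real.sin (β - α) := by simp [hW_def, hβ]
    rw [this]
    exact mul_nonpos_of_nonpos_of_nonneg hu'β hsin_nonneg
  have hintpos : 0 < ∫ x in α..β, w x ^ 2 * u x * Real.sin (x - α) := by
    apply intervalIntegral.intervalIntegral_pos_of_pos_on hint _ hαβ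
    intro x hx
    have h1 : 0 < u x := hpos x hx
    have h2 : 0 < Real.sin (x - α) := by
      apply Real.sin_pos_of_pos_of_lt_pi
      · simp only [Set.mem_Ioo] at hx; linarith [hx.1]
      · simp only [Set.mem_Ioo] at hx; linarith [hx.2]
    have h3 : 0 < w x ^ 2 := pow_pos (hwpos x) 2
    positivity
  rw [hftc, hWα] at hintpos
  linarith

/-- Extract the connected component of positivity around `t` between two zeros. -/
lemma pos_component {u : ℝ → ℝ} (hu : Continuous u) {z₁ z₂ t : ℝ}
    (h1 : z₁ < t) (h2 : t < z₂) (hz₁ : u z₁ = 0) (hz₂ : u z₂ = 0) (ht : 0 < u t) :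
    ∃ α β, z₁ ≤ α ∧ α < t ∧ t < β ∧ β ≤ z₂ ∧ u α = 0 ∧ u β = 0 ∧
      ∀ x ∈ Set.Ioo α β, 0 < u x := by
  set S : Set ℝ := Set.Icc z₁ t ∩ u ⁻¹' {0} with hS_def
  have hS_closed : IsClosed S := isClosed_Icc.inter (isClosed_singleton.preimage hu)
  have hS_ne : S.Nonempty := ⟨z₁, ⟨le_refl z₁, h1.le⟩, hz₁⟩
  have hS_bdd : BddAbove S := bddAbove_Icc.mono Set.inter_subset_left
  set α := sSup S with hα_def
  have hαS : α ∈ S := hS_closed.csSup_mem hS_ne hS_bdd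
  have hαmem : α ∈ Set.Icc z₁ t := hαS.1
  have huα : u α = 0 := hαS.2
  have hαt : α < t := lt_of_le_of_ne hαmem.2 (fun heq => by rw [heq] at huα; exact absurd huα (ne_of_gt ht))
  set T : Set ℝ := Set.Icc t z₂ ∩ u ⁻¹' {0} with hT_def
  have hT_closed : IsClosed T := isClosed_Icc.inter (isClosed_singleton.preimage hu)
  have hT_ne : T.Nonempty := ⟨z₂, ⟨h2.le, le_refl z₂⟩, hz₂⟩
  have hT_bdd : BddBelow T := bddBelow_Icc.mono Set.inter_subset_left
  set β := sInf T with hβ_def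
  have hβT : β ∈ T := hT_closed.csInf_mem hT_ne hT_bdd
  have hβmem : β ∈ Set.Icc t z₂ := hβT.1
  have huβ : u β = 0 := hβT.2
  have htβ : t < β := lt_of_le_of_ne hβmem.1 (fun heq => by rw [← heq] at huβ; exact absurd huβ (ne_of_gt ht))
  refine ⟨α, β, hαmem.1, hαt, htβ, hβmem.2, huα, huβ, ?_⟩
  -- positivity on (α, t]
  have left : ∀ x ∈ Set.Ioc α t, 0 < u x := by
    intro x hx
    rcases lt_trichotomy (u x) 0 with hneg | hzero | hposx
    · -- a zero between x and t, contradicting sSup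
      obtain ⟨y, hy, hy0⟩ := intermediate_value_Ioo hx.2 (hu.continuousOn)
        (Set.mem_Ioo.mpr ⟨hneg, ht⟩)
      have hyS : y ∈ S := ⟨⟨by linarith [hαmem.1, hx.1, hy.1], hy.2.le⟩, hy0⟩
      have := le_csSup hS_bdd hyS
      have : y ≤ α := this
      linarith [hy.1, hx.1]
    · have hxS : x ∈ S := ⟨⟨by linarith [hαmem.1, hx.1], hx.2⟩, hzero⟩
      have := le_csSup hS_bdd hxS
      linarith [hx.1]
    · exact hposx
  have right : ∀ x ∈ Set.Ico t β, 0 < u x := by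
    intro x hx
    rcases lt_trichotomy (u x) 0 with hneg | hzero | hposx
    · obtain ⟨y, hy, hy0⟩ := intermediate_value_Ioo' hx.1 (hu.continuousOn)
        (Set.mem_Ioo.mpr ⟨hneg, ht⟩)
      have hyT : T.Nonempty := hT_ne
      have hyT' : y ∈ T := ⟨⟨hy.1.le, by linarith [hβmem.2, hx.2, hy.2]⟩, hy0⟩
      have := csInf_le hT_bdd hyT'
      linarith [hy.2, hx.2]
    · have hxT : x ∈ T := ⟨⟨hx.1, by linarith [hβmem.2, hx.2]⟩, hzero⟩
      have := csInf_le hT_bdd hxT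
      linarith [hx.2]
    · exact hposx
  intro x hx
  rcases le_or_gt x t with hle | hgt
  · exact left x ⟨hx.1, hle⟩
  · exact right x ⟨hgt.le, hx.2⟩

theorem stmt10 (c : ℝ) (hc0 : 0 < c) (hc1 : c < Real.exp (-1/2))
    (hempty : ¬ ∃ h₀ r : ℝ, 0 < r ∧ GoodPair c h₀ (h₀ + r) ∧
        ∃ k : ℕ, 0 < k ∧ Theta c h₀ r = Real.pi / k) :
    ∀ h : ℝ → ℝ, Function.Periodic h (2 * Real.pi) → ContDiff ℝ (⊤ : ℕ∞) h →
      (∀ θ, 0 ≤ h θ) →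
      (∀ θ, Real.exp (-((deriv h θ)^2 + (h θ)^2)/2) * (deriv (deriv h) θ + h θ) = c) →
      ∀ θ₁ θ₂, h θ₁ = h θ₂ := by
  intro h hper hsmooth _hpos hode θ₁ θ₂
  by_contra hne
  have hdiff : Differentiable ℝ h := hsmooth.differentiable (by simp)
  have hsm : ContDiff ℝ ((⊤ : ℕ∞) : WithTop ℕ∞) h := hsmooth.of_le (by simp)
  have hu_smooth : ContDiff ℝ ((⊤ : ℕ∞) : WithTop ℕ∞) (deriv h) :=
    (contDiff_infty_iff_deriv.mp hsm).2
  have hu_diff : Differentiable ℝ (deriv h) := hu_smooth.differentiable (by simp)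
  have hu'_cont : Continuous (deriv (deriv h)) :=
    ((contDiff_infty_iff_deriv.mp hu_smooth).2).continuous
  have hu_cont : Continuous (deriv h) := hu_smooth.continuous
  have hh_cont : Continuous h := hsmooth.continuous
  have hder : ∀ x, HasDerivAt h (deriv h x) x := fun x => (hdiff x).hasDerivAt
  have hder2 : ∀ x, HasDerivAt (deriv h) (deriv (deriv h) x) x := fun x => (hu_diff x).hasDerivAt
  -- first consequence of the ODE
  have hw_eq : ∀ x, deriv (deriv h) x + h x = c * Real.exp ((deriv h x ^ 2 + h x ^ 2) / 2) := by
    intro x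
    have H := hode x
    have key : Real.exp (-((deriv h x) ^ 2 + (h x) ^ 2) / 2) *
        Real.exp ((deriv h x ^ 2 + h x ^ 2) / 2) = 1 := by
      rw [← Real.exp_add, show -((deriv h x) ^ 2 + (h x) ^ 2) / 2 +
        (deriv h x ^ 2 + h x ^ 2) / 2 = 0 by ring, Real.exp_zero]
    calc deriv (deriv h) x + h x
        = (deriv (deriv h) x + h x) * (Real.exp (-((deriv h x) ^ 2 + (h x) ^ 2) / 2) *
            Real.exp ((deriv h x ^ 2 + h x ^ 2) / 2)) := by rw [key, mul_one]
      _ = (Real.exp (-((deriv h x) ^ 2 + (h x) ^ 2) / 2) * (deriv (deriv h) x + h x)) *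
            Real.exp ((deriv h x ^ 2 + h x ^ 2) / 2) := by ring
      _ = c * Real.exp ((deriv h x ^ 2 + h x ^ 2) / 2) := by rw [H]
  have hwpos : ∀ x, 0 < deriv (deriv h) x + h x := by
    intro x; rw [hw_eq x]; positivity
  have hw_cont : Continuous (fun x => deriv (deriv h) x + h x) := hu'_cont.add hh_cont
  -- second derivative of `deriv h`
  have hu'' : ∀ x, HasDerivAt (deriv (deriv h))
      (((deriv (deriv h) x + h x) ^ 2 - 1) * deriv h x) x := by
    intro x
    have hinner : HasDerivAt (fun y => (deriv h y ^ 2 + h y ^ 2) / 2)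
        (deriv h x * deriv (deriv h) x + h x * deriv h x) x := by
      have h1 : HasDerivAt (fun y => deriv h y ^ 2)
          ((2 : ℕ) * deriv h x ^ 1 * deriv (deriv h) x) x := (hder2 x).pow 2
      have h2 : HasDerivAt (fun y => h y ^ 2) ((2 : ℕ) * h x ^ 1 * deriv h x) x := (hder x).pow 2
      have := (h1.add h2).div_const 2
      refine this.congr_deriv ?_
      push_cast
      ring
    have hg : HasDerivAt (fun y => c * Real.exp ((deriv h y ^ 2 + h y ^ 2) / 2) - h y)
        (c * (Real.exp ((deriv h x ^ 2 + h x ^ 2) / 2) *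
          (deriv h x * deriv (deriv h) x + h x * deriv h x)) - deriv h x) x :=
      ((hinner.exp).const_mul c).sub (hder x)
    have heq : (fun y => c * Real.exp ((deriv h y ^ 2 + h y ^ 2) / 2) - h y)
        =ᶠ[nhds x] deriv (deriv h) := by
      apply Filter.Eventually.of_forall
      intro y
      have := hw_eq y
      linarith
    have hg' := hg.congr_of_eventuallyEq heq.symm
    refine hg'.congr_deriv ?_
    have e1 : c * Real.exp ((deriv h x ^ 2 + h x ^ 2) / 2) = deriv (deriv h) x + h x :=
      (hw_eq x).symm
    linear_combination (deriv h x * (deriv (deriv h) x + h x)) * e1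
  -- periodicity of the derivative
  have hperu : Function.Periodic (deriv h) (2 * π) := by
    intro x
    have hcomp : HasDerivAt (fun y => h (y + 2 * π)) (deriv h (x + 2 * π)) x := by
      have h1 : HasDerivAt (fun y : ℝ => y + 2 * π) 1 x := (hasDerivAt_id x).add_const _
      have := (hder (x + 2 * π)).comp x h1
      rw [mul_one] at this
      exact this
    have hfun : (fun y => h (y + 2 * π)) = h := funext fun y => hper y
    rw [hfun] at hcomp
    exact hcomp.unique (hder x)
  -- positivity somewhere of the derivative
  have pi_pos := Real.pi_pos
  have key_const : (∀ x, deriv h x ≤ 0) ∨ (∀ x, 0 ≤ deriv h x) → False := by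
    rintro (hcase | hcase)
    · have hanti : Antitone h := antitone_of_deriv_nonpos hdiff hcase
      have : ∀ a b : ℝ, a ≤ b → h a = h b := by
        intro a b hab
        obtain ⟨n, hn⟩ := exists_nat_gt ((b - a) / (2 * π))
        have hble : b ≤ a + n * (2 * π) := by
          have : (b - a) < n * (2 * π) := by
            rw [div_lt_iff₀ (by positivity)] at hn
            linarith
          linarith
        have hpn : h (a + n * (2 * π)) = h a := by
          simpa [mul_comm, mul_assoc] using (hper.nat_mul n) a
        have h1 : h b ≤ h a := hanti hab
        have h2 : h (a + n * (2 * π)) ≤ h b := hanti hble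
        linarith
      rcases le_total θ₁ θ₂ with hle | hle
      · exact hne (this θ₁ θ₂ hle)
      · exact hne ((this θ₂ θ₁ hle).symm)
    · have hmono : Monotone h := monotone_of_deriv_nonneg hdiff hcase
      have : ∀ a b : ℝ, a ≤ b → h a = h b := by
        intro a b hab
        obtain ⟨n, hn⟩ := exists_nat_gt ((b - a) / (2 * π))
        have hble : b ≤ a + n * (2 * π) := by
          have : (b - a) < n * (2 * π) := by
            rw [div_lt_iff₀ (by positivity)] at hn
            linarith
          linarith
        have hpn : h (a + n * (2 * π)) = h a := by
          simpa [mul_comm, mul_assoc] using (hper.nat_mul n) a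
        have h1 : h a ≤ h b := hmono hab
        have h2 : h b ≤ h (a + n * (2 * π)) := hmono hble
        linarith
      rcases le_total θ₁ θ₂ with hle | hle
      · exact hne (this θ₁ θ₂ hle)
      · exact hne ((this θ₂ θ₁ hle).symm)
  have hexpos : ∃ t, 0 < deriv h t := by
    by_contra hcon
    push_neg at hcon
    exact key_const (Or.inl fun x => (hcon x))
  have hexneg : ∃ t, deriv h t < 0 := by
    by_contra hcon
    push_neg at hcon
    exact key_const (Or.inr fun x => (hcon x))
  obtain ⟨tp, htp⟩ := hexpos
  obtain ⟨tn, htn⟩ := hexneg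
  -- translates of tn where the derivative is negative
  have hper_int : ∀ k : ℤ, deriv h (tn + k * (2 * π)) = deriv h tn := by
    intro k
    simpa [mul_comm, mul_assoc] using (hperu.int_mul k) tn
  -- a zero of `deriv h` below `tp`
  obtain ⟨k₁, hk₁⟩ := exists_int_lt ((tp - tn) / (2 * π))
  have hk₁' : tn + k₁ * (2 * π) < tp := by
    have h2 : (k₁ : ℝ) * (2 * π) < tp - tn := (lt_div_iff₀ (by positivity)).mp hk₁
    linarith
  obtain ⟨z₁, hz₁mem, hz₁⟩ := intermediate_value_Ioo hk₁'.le hu_cont.continuousOn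
    (Set.mem_Ioo.mpr ⟨by rw [hper_int k₁]; exact htn, htp⟩)
  -- a zero of `deriv h` above `tp`
  obtain ⟨k₂, hk₂⟩ := exists_int_gt ((tp - tn) / (2 * π))
  have hk₂' : tp < tn + k₂ * (2 * π) := by
    have h2 : tp - tn < (k₂ : ℝ) * (2 * π) := (div_lt_iff₀ (by positivity)).mp hk₂
    linarith
  obtain ⟨z₂, hz₂mem, hz₂⟩ := intermediate_value_Ioo' hk₂'.le hu_cont.continuousOn
    (Set.mem_Ioo.mpr ⟨by rw [hper_int k₂]; exact htn, htp⟩)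
  -- positive component
  obtain ⟨α, β, _, hαtp, htpβ, _, huα, huβ, hupos⟩ :=
    pos_component hu_cont hz₁mem.2 hz₂mem.1 hz₁ hz₂ htp
  have hgap1 : π < β - α := by
    by_contra hcon
    push_neg at hcon
    exact sturm_gap (fun x => deriv (deriv h) x + h x) (deriv h) (deriv (deriv h))
      hw_cont hwpos hder2 hu'' α β (hαtp.trans htpβ) hcon huα huβ hupos
  -- translate tn into (β, α + 2π)
  set p : ℝ := tn + (⌊(β - tn) / (2 * π)⌋ + 1) * (2 * π) with hp_def
  have hup : deriv h p < 0 := by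
    rw [hp_def]
    have := hper_int (⌊(β - tn) / (2 * π)⌋ + 1)
    push_cast at this ⊢
    rw [this]
    exact htn
  have hpβ : β < p := by
    have h1 : (β - tn) / (2 * π) < (⌊(β - tn) / (2 * π)⌋ + 1 : ℝ) := Int.lt_floor_add_one _
    have h2 : (β - tn) < ((⌊(β - tn) / (2 * π)⌋ : ℝ) + 1) * (2 * π) := by
      rw [div_lt_iff₀ (by positivity)] at h1
      linarith
    rw [hp_def]
    push_cast
    linarith
  have hpupper : p ≤ β + 2 * π := by
    have h1 : (⌊(β - tn) / (2 * π)⌋ : ℝ) ≤ (β - tn) / (2 * π) := Int.floor_le _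
    have h2 : (⌊(β - tn) / (2 * π)⌋ : ℝ) * (2 * π) ≤ β - tn := by
      rw [← le_div_iff₀ (by positivity)]
      exact h1
    rw [hp_def]
    push_cast
    linarith
  have hpα : p < α + 2 * π := by
    by_contra hcon
    push_neg at hcon
    -- then p - 2π ∈ [α, β] where deriv h ≥ 0, contradiction
    have hmem : p - 2 * π ∈ Set.Icc α β := ⟨by linarith, by linarith⟩
    have hval : deriv h (p - 2 * π) = deriv h p := by
      have := hperu (p - 2 * π)
      simpa [sub_add_cancel] using this.symm
    rcases eq_or_lt_of_le hmem.1 with heq | hlt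
    · rw [← heq, huα] at hval; linarith [hup, hval]
    · rcases eq_or_lt_of_le hmem.2 with heq2 | hlt2
      · rw [heq2, huβ] at hval; linarith
      · have := hupos (p - 2 * π) ⟨hlt, hlt2⟩
        linarith
  have huα2π : deriv h (α + 2 * π) = 0 := by
    have := hperu α
    rw [this, huα]
  -- negative component via -deriv h
  have hneg_cont : Continuous (fun x => -(deriv h x)) := hu_cont.neg
  obtain ⟨α', β', hβα', hα'p, hpβ', hβ'α2π, hvα', hvβ', hvpos⟩ :=
    pos_component hneg_cont hpβ hpα (by simp [huβ]) (by simp [huα2π])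
      (by simpa using hup)
  have hvα'' : deriv h α' = 0 := by
    have : -(deriv h α') = 0 := hvα'
    linarith
  have hvβ'' : deriv h β' = 0 := by
    have : -(deriv h β') = 0 := hvβ'
    linarith
  have hgap2 : π < β' - α' := by
    by_contra hcon
    push_neg at hcon
    refine sturm_gap (fun x => deriv (deriv h) x + h x) (fun x => -(deriv h x))
      (fun x => -(deriv (deriv h) x)) hw_cont hwpos
      (fun x => (hder2 x).neg) ?_ α' β' (hα'p.trans hpβ') hcon
      (by simp [hvα'']) (by simp [hvβ'']) hvpos
    intro x
    have := (hu'' x).neg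
    refine this.congr_deriv ?_
    ring
  linarith
end

section
/- Fix 0 < c < e^{-1/2} with smaller root m₁ < 1 of t·e^{-t²/2} = c, and let h₀(r) be such that (h₀(r), h₀(r)+r) is a good pair with respect to c. Then liminf_{r→0} Θ(c, h₀(r), r) ≥ π/√(1 − m₁²), where Θ(c,h₀,r) = ∫₀¹ r/√(−(t·r+h₀)² − 2 log(e^{−h₀²/2} − c·t·r)) dt. -/
open Real

/-!
Write `F(t)` for the radicand of `Θ(c, h, r)` and `D(t) = e^{-h²/2} - c t r`. The good-pair
relation makes `F(0) = F(1) = 0`, and `F'' = -2r²(1 - (c / D)²)` with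
`A = c e^{h²/2} ≤ c / D ≤ c e^{(h+r)²/2} = B` on `[0, 1]`. Comparing `F` with the parabolas
`r²(1 - B²) t(1 - t)` and `r²(1 - A²) t(1 - t)` by concavity, and using
`∫₀¹ dt / √(t(1 - t)) = π`, gives `π / √(1 - A²) ≤ Θ ≤ π / √(1 - B²)`. As `r → 0`, both `A` and
`B` tend to `c e^{m₁²/2} = m₁`, so `Θ` converges to `π / √(1 - m₁²)`.
-/

open Set Filter Topology MeasureTheory intervalIntegral

lemma hasDerivAt_arcsin_two_mul_sub_one {x : ℝ} (hx : x ∈ Ioo (0 : ℝ) 1) :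
    HasDerivAt (fun t => arcsin (2 * t - 1)) (1 / √(x * (1 - x))) x := by
  have hpos : 0 < x * (1 - x) := mul_pos hx.1 (sub_pos.2 hx.2)
  have hlin : HasDerivAt (fun t : ℝ => 2 * t - 1) 2 x := by
    simpa using ((hasDerivAt_id x).const_mul 2).sub_const 1
  have h : HasDerivAt (fun t => arcsin (2 * t - 1)) (1 / √(1 - (2 * x - 1) ^ 2) * 2) x :=
    (hasDerivAt_arcsin (by linarith [hx.1]) (by linarith [hx.2])).comp x hlin
  refine h.congr_deriv ?_
  rw [show 1 - (2 * x - 1) ^ 2 = 2 ^ 2 * (x * (1 - x)) by ring, sqrt_mul (by norm_num),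
    sqrt_sq (by norm_num)]
  field_simp [(sqrt_pos.2 hpos).ne']

lemma intervalIntegrable_one_div_sqrt_mul_one_sub :
    IntervalIntegrable (fun t : ℝ => 1 / √(t * (1 - t))) volume 0 1 :=
  intervalIntegrable_deriv_of_nonneg (g := fun t => arcsin (2 * t - 1)) (by fun_prop)
    (by simpa using fun x hx => hasDerivAt_arcsin_two_mul_sub_one hx)
    (fun _ _ => by positivity)

lemma integral_one_div_sqrt_mul_one_sub : ∫ t in (0 : ℝ)..1, 1 / √(t * (1 - t)) = π := by
  rw [integral_eq_sub_of_hasDerivAt_of_le zero_le_one (by fun_prop)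
    (fun x hx => hasDerivAt_arcsin_two_mul_sub_one hx) intervalIntegrable_one_div_sqrt_mul_one_sub]
  norm_num

lemma integral_one_div_sqrt_mem_Icc {F : ℝ → ℝ} {a b : ℝ} (ha : 0 < a) (hF : Measurable F)
    (hFab : ∀ t ∈ Ioo (0 : ℝ) 1, a * (t * (1 - t)) ≤ F t ∧ F t ≤ b * (t * (1 - t))) :
    π / √b ≤ ∫ t in (0 : ℝ)..1, 1 / √(F t) ∧ ∫ t in (0 : ℝ)..1, 1 / √(F t) ≤ π / √a := by
  have hcomp : ∀ t ∈ Ioo (0 : ℝ) 1, 0 ≤ 1 / √(F t) ∧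
      1 / √b * (1 / √(t * (1 - t))) ≤ 1 / √(F t) ∧ 1 / √(F t) ≤ 1 / √a * (1 / √(t * (1 - t))) := by
    intro t ht
    have hq : 0 < t * (1 - t) := mul_pos ht.1 (sub_pos.2 ht.2)
    have hFpos : 0 < F t := lt_of_lt_of_le (mul_pos ha hq) (hFab t ht).1
    have hb : 0 < b := pos_of_mul_pos_left (hFpos.trans_le (hFab t ht).2) hq.le
    simp only [one_div_mul_one_div, ← sqrt_mul hb.le, ← sqrt_mul ha.le]
    refine ⟨by positivity, ?_, ?_⟩
    · exact one_div_le_one_div_of_le (sqrt_pos.2 hFpos) (sqrt_le_sqrt (hFab t ht).2)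
    · exact one_div_le_one_div_of_le (sqrt_pos.2 (mul_pos ha hq)) (sqrt_le_sqrt (hFab t ht).1)
  have hupper := intervalIntegrable_one_div_sqrt_mul_one_sub.const_mul (1 / √a)
  have hint : IntervalIntegrable (fun t => 1 / √(F t)) volume 0 1 := by
    refine hupper.mono_fun (by fun_prop : Measurable fun t => 1 / √(F t)).aestronglyMeasurable ?_
    rw [uIoc_of_le zero_le_one, Measure.restrict_congr_set Ioo_ae_eq_Ioc.symm]
    refine ae_restrict_of_forall_mem measurableSet_Ioo fun t ht => ?_
    obtain ⟨h0, -, hle⟩ := hcomp t ht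
    dsimp only
    rw [Real.norm_of_nonneg h0, Real.norm_of_nonneg (h0.trans hle)]
    exact hle
  constructor
  · calc π / √b = ∫ t in (0 : ℝ)..1, 1 / √b * (1 / √(t * (1 - t))) := by
          rw [intervalIntegral.integral_const_mul, integral_one_div_sqrt_mul_one_sub]; ring
      _ ≤ ∫ t in (0 : ℝ)..1, 1 / √(F t) :=
          integral_mono_on_of_le_Ioo zero_le_one
            (intervalIntegrable_one_div_sqrt_mul_one_sub.const_mul _) hint
            fun t ht => (hcomp t ht).2.1
  · calc ∫ t in (0 : ℝ)..1, 1 / √(F t) ≤ ∫ t in (0 : ℝ)..1, 1 / √a * (1 / √(t * (1 - t))) :=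
          integral_mono_on_of_le_Ioo zero_le_one hint hupper fun t ht => (hcomp t ht).2.2
      _ = π / √a := by
          rw [intervalIntegral.integral_const_mul, integral_one_div_sqrt_mul_one_sub]; ring

lemma mul_mul_one_sub_le_of_deriv2_le {f f' f'' : ℝ → ℝ} {k : ℝ}
    (hf : ContinuousOn f (Icc 0 1)) (hf0 : f 0 = 0) (hf1 : f 1 = 0)
    (hf' : ∀ x ∈ Ioo (0 : ℝ) 1, HasDerivAt f (f' x) x)
    (hf'' : ∀ x ∈ Ioo (0 : ℝ) 1, HasDerivAt f' (f'' x) x)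
    (hk : ∀ x ∈ Ioo (0 : ℝ) 1, f'' x ≤ -2 * k) {t : ℝ} (ht : t ∈ Icc (0 : ℝ) 1) :
    k * (t * (1 - t)) ≤ f t := by
  have hconc : ConcaveOn ℝ (Icc 0 1) fun x => f x - k * (x * (1 - x)) := by
    refine concaveOn_of_hasDerivWithinAt2_nonpos (convex_Icc 0 1)
      (f' := fun x => f' x - k * (1 - 2 * x)) (f'' := fun x => f'' x + 2 * k)
      (hf.sub (by fun_prop)) (fun x hx => ?_) (fun x hx => ?_) (fun x hx => ?_) <;>
      rw [interior_Icc] at hx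
    · have hq : HasDerivAt (fun x => k * (x * (1 - x))) (k * (1 - 2 * x)) x :=
        (((hasDerivAt_id' x).mul ((hasDerivAt_id' x).const_sub 1)).const_mul k).congr_deriv
          (by ring)
      exact ((hf' x hx).sub hq).hasDerivWithinAt
    · have hq : HasDerivAt (fun x => k * (1 - 2 * x)) (-(2 * k)) x :=
        ((((hasDerivAt_id' x).const_mul 2).const_sub 1).const_mul k).congr_deriv (by ring)
      exact ((hf'' x hx).sub hq).hasDerivWithinAt.congr_deriv (by ring)
    · linarith [hk x hx]
  have := hconc.ge_on_segment (left_mem_Icc.2 zero_le_one) (right_mem_Icc.2 zero_le_one)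
    (by rwa [segment_eq_Icc zero_le_one])
  simp only [hf0, hf1] at this
  norm_num at this
  linarith

lemma le_mul_mul_one_sub_of_le_deriv2 {f f' f'' : ℝ → ℝ} {k : ℝ}
    (hf : ContinuousOn f (Icc 0 1)) (hf0 : f 0 = 0) (hf1 : f 1 = 0)
    (hf' : ∀ x ∈ Ioo (0 : ℝ) 1, HasDerivAt f (f' x) x)
    (hf'' : ∀ x ∈ Ioo (0 : ℝ) 1, HasDerivAt f' (f'' x) x)
    (hk : ∀ x ∈ Ioo (0 : ℝ) 1, -2 * k ≤ f'' x) {t : ℝ} (ht : t ∈ Icc (0 : ℝ) 1) :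
    f t ≤ k * (t * (1 - t)) := by
  have := mul_mul_one_sub_le_of_deriv2_le (f := -f) (f' := -f') (f'' := -f'') (k := -k) hf.neg
    (by simp [hf0]) (by simp [hf1]) (fun x hx => (hf' x hx).neg) (fun x hx => (hf'' x hx).neg)
    (fun x hx => by simp only [Pi.neg_apply]; linarith [hk x hx]) ht
  simp only [Pi.neg_apply] at this
  linarith

noncomputable def thetaRadicand (c h r t : ℝ) : ℝ :=
  -(t * r + h) ^ 2 - 2 * log (exp (-h ^ 2 / 2) - c * t * r)

lemma hasDerivAt_const_sub_mul_mul (a c r t : ℝ) :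
    HasDerivAt (fun s => a - c * s * r) (-(c * r)) t := by
  simpa [mul_assoc] using (((hasDerivAt_id t).const_mul c).mul_const r).const_sub a

section thetaRadicand

variable {c h r t : ℝ}

lemma thetaRadicand_zero : thetaRadicand c h r 0 = 0 := by
  simp only [thetaRadicand, zero_mul, zero_add, mul_zero, sub_zero, log_exp]
  ring

lemma thetaRadicand_one (hrel : exp (-(h + r) ^ 2 / 2) = exp (-h ^ 2 / 2) - c * r) :
    thetaRadicand c h r 1 = 0 := by
  simp only [thetaRadicand, one_mul, mul_one, ← hrel, log_exp]
  ring

lemma hasDerivAt_thetaRadicand (ht : 0 < exp (-h ^ 2 / 2) - c * t * r) :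
    HasDerivAt (thetaRadicand c h r)
      (-2 * r * (t * r + h) + 2 * c * r / (exp (-h ^ 2 / 2) - c * t * r)) t := by
  have hlin : HasDerivAt (fun s => s * r + h) r t := (hasDerivAt_mul_const r).add_const h
  have hden := hasDerivAt_const_sub_mul_mul (exp (-h ^ 2 / 2)) c r t
  exact ((hlin.pow 2).neg.sub ((hden.log ht.ne').const_mul 2)).congr_deriv (by field_simp; ring)

lemma hasDerivAt_deriv_thetaRadicand (ht : 0 < exp (-h ^ 2 / 2) - c * t * r) :
    HasDerivAt (fun s => -2 * r * (s * r + h) + 2 * c * r / (exp (-h ^ 2 / 2) - c * s * r))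
      (-2 * r ^ 2 * (1 - (c / (exp (-h ^ 2 / 2) - c * t * r)) ^ 2)) t := by
  have hlin : HasDerivAt (fun s => s * r + h) r t := (hasDerivAt_mul_const r).add_const h
  have hden := hasDerivAt_const_sub_mul_mul (exp (-h ^ 2 / 2)) c r t
  exact ((hlin.const_mul (-2 * r)).add ((hasDerivAt_const t (2 * c * r)).div hden ht.ne')
    ).congr_deriv (by field_simp; ring)

variable (hc : 0 < c) (hr : 0 < r) (hrel : exp (-(h + r) ^ 2 / 2) = exp (-h ^ 2 / 2) - c * r)
include hc hr hrel

lemma exp_neg_sq_le_sub_mul_le (ht : t ∈ Icc (0 : ℝ) 1) :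
    exp (-(h + r) ^ 2 / 2) ≤ exp (-h ^ 2 / 2) - c * t * r ∧
      exp (-h ^ 2 / 2) - c * t * r ≤ exp (-h ^ 2 / 2) := by
  have hcr : 0 ≤ c * r := (mul_pos hc hr).le
  constructor <;> nlinarith [ht.1, ht.2]

lemma thetaRadicand_mem_Icc (ht : t ∈ Icc (0 : ℝ) 1) :
    r ^ 2 * (1 - (c * exp ((h + r) ^ 2 / 2)) ^ 2) * (t * (1 - t)) ≤ thetaRadicand c h r t ∧
      thetaRadicand c h r t ≤ r ^ 2 * (1 - (c * exp (h ^ 2 / 2)) ^ 2) * (t * (1 - t)) := by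
  have hden : ∀ x ∈ Icc (0 : ℝ) 1, 0 < exp (-h ^ 2 / 2) - c * x * r := fun x hx =>
    (exp_pos _).trans_le (exp_neg_sq_le_sub_mul_le hc hr hrel hx).1
  have hratio : ∀ x ∈ Icc (0 : ℝ) 1, 0 ≤ c * exp (h ^ 2 / 2) ∧
      c * exp (h ^ 2 / 2) ≤ c / (exp (-h ^ 2 / 2) - c * x * r) ∧
      c / (exp (-h ^ 2 / 2) - c * x * r) ≤ c * exp ((h + r) ^ 2 / 2) := by
    intro x hx
    obtain ⟨hlo, hhi⟩ := exp_neg_sq_le_sub_mul_le hc hr hrel hx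
    refine ⟨by positivity, ?_, ?_⟩
    · calc c * exp (h ^ 2 / 2) = c / exp (-h ^ 2 / 2) := by rw [neg_div, exp_neg, div_inv_eq_mul]
        _ ≤ _ := div_le_div_of_nonneg_left hc.le (hden x hx) hhi
    · calc c / (exp (-h ^ 2 / 2) - c * x * r) ≤ c / exp (-(h + r) ^ 2 / 2) :=
            div_le_div_of_nonneg_left hc.le (exp_pos _) hlo
        _ = c * exp ((h + r) ^ 2 / 2) := by rw [neg_div, exp_neg, div_inv_eq_mul]
  have hcont : ContinuousOn (thetaRadicand c h r) (Icc 0 1) := fun x hx =>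
    (hasDerivAt_thetaRadicand (hden x hx)).continuousAt.continuousWithinAt
  have hderiv := fun x (hx : x ∈ Ioo (0 : ℝ) 1) =>
    hasDerivAt_thetaRadicand (hden x (Ioo_subset_Icc_self hx))
  have hderiv2 := fun x (hx : x ∈ Ioo (0 : ℝ) 1) =>
    hasDerivAt_deriv_thetaRadicand (hden x (Ioo_subset_Icc_self hx))
  constructor
  · refine mul_mul_one_sub_le_of_deriv2_le hcont thetaRadicand_zero (thetaRadicand_one hrel)
      hderiv hderiv2 (fun x hx => ?_) ht
    obtain ⟨h0, hlo, hhi⟩ := hratio x (Ioo_subset_Icc_self hx)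
    have := pow_le_pow_left₀ (h0.trans hlo) hhi 2
    nlinarith
  · refine le_mul_mul_one_sub_of_le_deriv2 hcont thetaRadicand_zero (thetaRadicand_one hrel)
      hderiv hderiv2 (fun x hx => ?_) ht
    obtain ⟨h0, hlo, -⟩ := hratio x (Ioo_subset_Icc_self hx)
    have := pow_le_pow_left₀ h0 hlo 2
    nlinarith

end thetaRadicand

lemma theta_mem_Icc {c h r : ℝ} (hc : 0 < c) (hr : 0 < r)
    (hrel : exp (-(h + r) ^ 2 / 2) = exp (-h ^ 2 / 2) - c * r)
    (hB : c * exp ((h + r) ^ 2 / 2) < 1) :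
    π / √(1 - (c * exp (h ^ 2 / 2)) ^ 2) ≤ Theta c h r ∧
      Theta c h r ≤ π / √(1 - (c * exp ((h + r) ^ 2 / 2)) ^ 2) := by
  have hscale : Theta c h r = ∫ t in (0 : ℝ)..1, 1 / √(thetaRadicand c h r t / r ^ 2) := by
    refine integral_congr fun t _ => ?_
    simp only [thetaRadicand, sqrt_div' _ (sq_nonneg r), sqrt_sq hr.le, one_div_div]
  rw [hscale]
  refine integral_one_div_sqrt_mem_Icc ?_ (by unfold thetaRadicand; fun_prop) fun t ht => ?_
  · have : 0 < c * exp ((h + r) ^ 2 / 2) := by positivity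
    nlinarith
  · obtain ⟨hlo, hhi⟩ := thetaRadicand_mem_Icc hc hr hrel (Ioo_subset_Icc_self ht)
    have hr2 : 0 < r ^ 2 := by positivity
    rw [le_div_iff₀ hr2, div_le_iff₀ hr2]
    constructor <;> linarith

lemma GoodPair.exp_neg_sq_add {c a r : ℝ} (hp : GoodPair c a (a + r)) :
    exp (-(a + r) ^ 2 / 2) = exp (-a ^ 2 / 2) - c * r := by
  linarith [hp.2.1]

theorem stmt12_general (c : ℝ) (hc0 : 0 < c)
    (m₁ : ℝ) (hm₁0 : 0 < m₁) (hm₁1 : m₁ < 1) (hm₁ : m₁ * Real.exp (-m₁^2/2) = c)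
    (h₀ : ℝ → ℝ) (ε : ℝ) (hε : 0 < ε)
    (hgp : ∀ r ∈ Set.Ioo (0:ℝ) ε, GoodPair c (h₀ r) (h₀ r + r))
    (hlim : Filter.Tendsto h₀ (nhdsWithin 0 (Set.Ioi 0)) (nhds m₁)) :
    Real.pi / Real.sqrt (1 - m₁^2) ≤
      Filter.liminf (fun r => Theta c (h₀ r) r) (nhdsWithin 0 (Set.Ioi 0)) := by
  have hm : c * exp (m₁ ^ 2 / 2) = m₁ := by
    rw [← hm₁, mul_assoc, ← exp_add, neg_div, neg_add_cancel, exp_zero, mul_one]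
  have hlim' : Tendsto (fun r => h₀ r + r) (𝓝[>] 0) (𝓝 m₁) := by
    simpa using hlim.add (tendsto_nhdsWithin_of_tendsto_nhds tendsto_id)
  have hratio : ∀ {g : ℝ → ℝ}, Tendsto g (𝓝[>] 0) (𝓝 m₁) →
      Tendsto (fun r => c * exp (g r ^ 2 / 2)) (𝓝[>] 0) (𝓝 m₁) := fun hg => by
    have hcont : Continuous fun x : ℝ => c * exp (x ^ 2 / 2) := by fun_prop
    simpa only [hm, Function.comp_def] using (hcont.tendsto m₁).comp hg
  have hcontAt : ContinuousAt (fun x => π / √(1 - x ^ 2)) m₁ :=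
    continuousAt_const.div (by fun_prop) (sqrt_pos.2 (by nlinarith)).ne'
  have hbounds :=
    Filter.Eventually.and (Ioo_mem_nhdsGT hε) ((hratio hlim').eventually_lt_const hm₁1)
  have hΘ : Tendsto (fun r => Theta c (h₀ r) r) (𝓝[>] 0) (𝓝 (π / √(1 - m₁ ^ 2))) :=
    tendsto_of_tendsto_of_tendsto_of_le_of_le' (hcontAt.tendsto.comp (hratio hlim))
      (hcontAt.tendsto.comp (hratio hlim'))
      (hbounds.mono fun r hr => (theta_mem_Icc hc0 hr.1.1 (hgp r hr.1).exp_neg_sq_add hr.2).1)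
      (hbounds.mono fun r hr => (theta_mem_Icc hc0 hr.1.1 (hgp r hr.1).exp_neg_sq_add hr.2).2)
  exact hΘ.liminf_eq.ge

theorem stmt12 (c : ℝ) (hc0 : 0 < c) (hc1 : c < Real.exp (-1/2))
    (m₁ : ℝ) (hm₁0 : 0 < m₁) (hm₁1 : m₁ < 1) (hm₁ : m₁ * Real.exp (-m₁^2/2) = c)
    (h₀ : ℝ → ℝ) (ε : ℝ) (hε : 0 < ε)
    (hgp : ∀ r ∈ Set.Ioo (0:ℝ) ε, GoodPair c (h₀ r) (h₀ r + r))
    (hlim : Filter.Tendsto h₀ (nhdsWithin 0 (Set.Ioi 0)) (nhds m₁)) :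
    Real.pi / Real.sqrt (1 - m₁^2) ≤
      Filter.liminf (fun r => Theta c (h₀ r) r) (nhdsWithin 0 (Set.Ioi 0)) :=
  stmt12_general c hc0 m₁ hm₁0 hm₁1 hm₁ h₀ ε hε hgp hlim
end

section
/- For fixed 0 < c < e^{-1/2}, m₁ the smaller positive root of t·e^{-t²/2} = c, h₀(r) the good-pair parametrization with h₀(0) = m₁, and fixed t ∈ (0,1): lim_{r→0} r² / ( −2 log(e^{−h₀(r)²/2} − c·t·r) − (t·r + h₀(r))² ) = −1 / ((1 − m₁²)(t² − t)). -/
open Real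

lemma exp_quad : Filter.Tendsto (fun x : ℝ => (Real.exp x - 1 - x)/x^2) (nhdsWithin 0 {(0:ℝ)}ᶜ) (nhds (1/2)) := by
  have key : ∀ x : ℝ, |x| ≤ 1 → x ≠ 0 → |(Real.exp x - 1 - x)/x^2 - 1/2| ≤ |x| := by
    intro x hx hx0
    have hb := Real.exp_bound hx (n := 3) (by norm_num)
    have hsum : ∑ m ∈ Finset.range 3, x ^ m / m.factorial = 1 + x + x^2/2 := by
      norm_num [Finset.sum_range_succ]
    rw [hsum] at hb
    have hx2 : (0:ℝ) < x^2 := by positivity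
    have heq : (Real.exp x - 1 - x)/x^2 - 1/2 = (Real.exp x - (1 + x + x^2/2))/x^2 := by
      field_simp
      ring
    rw [heq, abs_div, abs_of_pos hx2, div_le_iff₀ hx2]
    calc |Real.exp x - (1 + x + x^2/2)| ≤ |x|^3 * ((3:ℕ).succ / ((3:ℕ).factorial * 3)) := hb
      _ ≤ |x|^3 * 1 := by
          apply mul_le_mul_of_nonneg_left _ (by positivity)
          norm_num [Nat.factorial]
      _ = |x| * x^2 := by
          rw [mul_one, pow_succ, mul_comm, sq_abs]
  have habs : Filter.Tendsto (fun x : ℝ => |x|) (nhdsWithin 0 {(0:ℝ)}ᶜ) (nhds 0) := by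
    have : Filter.Tendsto (fun x : ℝ => |x|) (nhds 0) (nhds 0) := by
      simpa using (continuous_abs.tendsto (0:ℝ))
    exact this.mono_left nhdsWithin_le_nhds
  have hev : ∀ᶠ x : ℝ in nhdsWithin 0 {(0:ℝ)}ᶜ, ‖(Real.exp x - 1 - x)/x^2 - 1/2‖ ≤ |x| := by
    have h1 : ∀ᶠ x : ℝ in nhdsWithin 0 {(0:ℝ)}ᶜ, |x| ≤ 1 := by
      apply eventually_nhdsWithin_of_eventually_nhds
      have : ∀ᶠ x : ℝ in nhds 0, |x| < 1 := by
        have := Metric.ball_mem_nhds (0:ℝ) one_pos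
        filter_upwards [this] with x hx
        simpa [Real.dist_eq] using hx
      exact this.mono fun x hx => hx.le
    filter_upwards [h1, self_mem_nhdsWithin] with x hx1 hx0
    simpa using key x hx1 hx0
  have h1 : Filter.Tendsto (fun x : ℝ => (Real.exp x - 1 - x)/x^2 - 1/2) (nhdsWithin 0 {(0:ℝ)}ᶜ) (nhds 0) :=
    squeeze_zero_norm' hev habs
  have := h1.add_const (1/2)
  simpa using this

theorem stmt13 (c : ℝ) (hc0 : 0 < c) (hc1 : c < Real.exp (-1/2))
    (m₁ : ℝ) (hm₁0 : 0 < m₁) (hm₁1 : m₁ < 1) (hm₁ : m₁ * Real.exp (-m₁^2/2) = c)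
    (h₀ : ℝ → ℝ) (ε : ℝ) (hε : 0 < ε)
    (hgp : ∀ r ∈ Set.Ioo (0:ℝ) ε, GoodPair c (h₀ r) (h₀ r + r))
    (h₀0 : h₀ 0 = m₁)
    (hsmooth : ContDiffOn ℝ 2 h₀ (Set.Ico 0 ε))
    (hd1 : Filter.Tendsto (fun r => deriv h₀ r) (nhdsWithin 0 (Set.Ioi 0)) (nhds (-1/2)))
    (hd2 : Filter.Tendsto (fun r => r * deriv (deriv h₀) r) (nhdsWithin 0 (Set.Ioi 0)) (nhds 0))
    (t : ℝ) (ht : t ∈ Set.Ioo (0:ℝ) 1) :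
    Filter.Tendsto
      (fun r => r^2 /
        (-2 * Real.log (Real.exp (-(h₀ r)^2/2) - c * t * r) - (t * r + h₀ r)^2))
      (nhdsWithin 0 (Set.Ioi 0))
      (nhds (-1 / ((1 - m₁^2) * (t^2 - t)))) := by
  obtain ⟨ht0, ht1⟩ := ht
  set l := nhdsWithin (0:ℝ) (Set.Ioi 0) with hldef
  have hr0 : Filter.Tendsto (fun r : ℝ => r) l (nhds 0) :=
    Filter.tendsto_id'.mpr nhdsWithin_le_nhds
  have hrpos : ∀ᶠ r : ℝ in l, 0 < r := self_mem_nhdsWithin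
  have hIoo : ∀ᶠ r : ℝ in l, r ∈ Set.Ioo 0 ε :=
    Ioo_mem_nhdsGT_of_mem ⟨le_refl 0, hε⟩
  -- continuity of h₀ at 0 from the right
  have hh : Filter.Tendsto h₀ l (nhds m₁) := by
    have hc0' : ContinuousWithinAt h₀ (Set.Ico 0 ε) 0 :=
      hsmooth.continuousOn 0 ⟨le_refl 0, hε⟩
    have h1 : Filter.Tendsto h₀ (nhdsWithin 0 (Set.Ico 0 ε)) (nhds m₁) := by
      have := hc0'.tendsto
      rwa [h₀0] at this
    refine h1.mono_left ?_
    rw [hldef, ← nhdsWithin_Ioo_eq_nhdsGT hε]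
    exact nhdsWithin_mono 0 Set.Ioo_subset_Ico_self
  have hhpos : ∀ᶠ r in l, m₁/2 < h₀ r :=
    hh.eventually (eventually_gt_nhds (by linarith))
  set A : ℝ → ℝ := fun r => t*r*(h₀ r) + t^2*r^2/2 with hAdef
  set B : ℝ → ℝ := fun r => -((1-t)*r*(h₀ r)) - (1-t)*(1+t)*r^2/2 with hBdef
  set S : ℝ → ℝ := fun r => (1-t)*Real.exp (A r) + t*Real.exp (B r) with hSdef
  have hSpos : ∀ r, 0 < S r := fun r =>
    add_pos (mul_pos (by linarith) (Real.exp_pos _)) (mul_pos ht0 (Real.exp_pos _))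
  have hA0 : Filter.Tendsto A l (nhds 0) := by
    have h1 : Filter.Tendsto (fun r => t*r*(h₀ r) + t^2*r^2/2) l
        (nhds (t*0*m₁ + t^2*0^2/2)) := by
      exact ((tendsto_const_nhds.mul hr0).mul hh).add
        ((tendsto_const_nhds.mul (hr0.pow 2)).div_const 2)
    simpa using h1
  have hB0 : Filter.Tendsto B l (nhds 0) := by
    have h1 : Filter.Tendsto (fun r => -((1-t)*r*(h₀ r)) - (1-t)*(1+t)*r^2/2) l
        (nhds (-((1-t)*0*m₁) - (1-t)*(1+t)*0^2/2)) := by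
      exact (((tendsto_const_nhds.mul hr0).mul hh).neg).sub
        ((tendsto_const_nhds.mul (hr0.pow 2)).div_const 2)
    simpa using h1
  have hAdivr : Filter.Tendsto (fun r => A r / r) l (nhds (t*m₁)) := by
    have base : Filter.Tendsto (fun r => t*(h₀ r) + t^2*r/2) l (nhds (t*m₁ + t^2*0/2)) :=
      (tendsto_const_nhds.mul hh).add ((tendsto_const_nhds.mul hr0).div_const 2)
    refine Filter.Tendsto.congr' ?_ (by simpa using base)
    filter_upwards [hrpos] with r hr
    have hrne : r ≠ 0 := ne_of_gt hr
    simp only [hAdef]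
    field_simp
  have hBdivr : Filter.Tendsto (fun r => B r / r) l (nhds (-((1-t)*m₁))) := by
    have base : Filter.Tendsto (fun r => -((1-t)*(h₀ r)) - (1-t)*(1+t)*r/2) l
        (nhds (-((1-t)*m₁) - (1-t)*(1+t)*0/2)) :=
      ((tendsto_const_nhds.mul hh).neg).sub ((tendsto_const_nhds.mul hr0).div_const 2)
    refine Filter.Tendsto.congr' ?_ (by simpa using base)
    filter_upwards [hrpos] with r hr
    have hrne : r ≠ 0 := ne_of_gt hr
    simp only [hBdef]
    field_simp
  have hApos : ∀ᶠ r in l, 0 < A r := by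
    filter_upwards [hrpos, hhpos] with r hr hhr
    have h1 : 0 < h₀ r := by linarith
    simp only [hAdef]
    have : 0 < t*r*(h₀ r) := by positivity
    nlinarith [sq_nonneg (t*r)]
  have hBneg : ∀ᶠ r in l, B r < 0 := by
    filter_upwards [hrpos, hhpos] with r hr hhr
    have h1 : 0 < h₀ r := by linarith
    simp only [hBdef]
    have h2 : 0 < (1-t)*r*(h₀ r) := by
      apply mul_pos (mul_pos (by linarith) hr) h1
    nlinarith [mul_pos (mul_pos (mul_pos (sub_pos.mpr ht1) (by linarith : (0:ℝ) < 1+t)) (mul_pos hr hr)) (by norm_num : (0:ℝ) < 1/2)]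
  have hEA : Filter.Tendsto (fun r => (Real.exp (A r) - 1 - A r)/r^2) l
      (nhds ((1/2)*(t*m₁)^2)) := by
    have hAne : Filter.Tendsto A l (nhdsWithin 0 {(0:ℝ)}ᶜ) :=
      tendsto_nhdsWithin_of_tendsto_nhds_of_eventually_within _ hA0
        (hApos.mono fun r hr => by simp [ne_of_gt hr])
    have h1 := exp_quad.comp hAne
    have h2 := h1.mul (hAdivr.pow 2)
    refine Filter.Tendsto.congr' ?_ h2
    filter_upwards [hApos, hrpos] with r h1' h2'
    have ha : A r ≠ 0 := ne_of_gt h1'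
    have hrne : r ≠ 0 := ne_of_gt h2'
    simp only [Function.comp]
    field_simp
  have hEB : Filter.Tendsto (fun r => (Real.exp (B r) - 1 - B r)/r^2) l
      (nhds ((1/2)*((1-t)*m₁)^2)) := by
    have hBne : Filter.Tendsto B l (nhdsWithin 0 {(0:ℝ)}ᶜ) :=
      tendsto_nhdsWithin_of_tendsto_nhds_of_eventually_within _ hB0
        (hBneg.mono fun r hr => by simp [ne_of_lt hr])
    have h1 := exp_quad.comp hBne
    have h2 := h1.mul (hBdivr.pow 2)
    have hval : 1/2 * (-((1-t)*m₁))^2 = (1/2)*((1-t)*m₁)^2 := by ring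
    rw [hval] at h2
    refine Filter.Tendsto.congr' ?_ h2
    filter_upwards [hBneg, hrpos] with r h1' h2'
    have hb : B r ≠ 0 := ne_of_lt h1'
    have hrne : r ≠ 0 := ne_of_gt h2'
    simp only [Function.comp]
    field_simp
  set L₁ : ℝ := t*(1-t)*(m₁^2-1)/2 with hL₁def
  have hS1 : Filter.Tendsto (fun r => (S r - 1)/r^2) l (nhds L₁) := by
    have combo : Filter.Tendsto (fun r =>
        (1-t)*((Real.exp (A r) - 1 - A r)/r^2) + t*((Real.exp (B r) - 1 - B r)/r^2)
          + (-(t*(1-t)/2))) l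
        (nhds ((1-t)*((1/2)*(t*m₁)^2) + t*((1/2)*((1-t)*m₁)^2) + (-(t*(1-t)/2)))) :=
      ((hEA.const_mul (1-t)).add (hEB.const_mul t)).add tendsto_const_nhds
    have hval : (1-t)*((1/2)*(t*m₁)^2) + t*((1/2)*((1-t)*m₁)^2) + (-(t*(1-t)/2)) = L₁ := by
      rw [hL₁def]; ring
    rw [hval] at combo
    refine Filter.Tendsto.congr' ?_ combo
    filter_upwards [hrpos] with r hr
    have hrne : r ≠ 0 := ne_of_gt hr
    simp only [hSdef, hAdef, hBdef]
    field_simp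
    ring
  have hL₁neg : L₁ < 0 := by
    rw [hL₁def]
    have h1 : m₁^2 - 1 < 0 := by nlinarith
    have h2 : 0 < t*(1-t) := mul_pos ht0 (by linarith)
    nlinarith
  have hStends : Filter.Tendsto S l (nhds 1) := by
    have h1 : Filter.Tendsto (fun r => (1-t)*Real.exp (A r) + t*Real.exp (B r)) l
        (nhds ((1-t)*Real.exp 0 + t*Real.exp 0)) :=
      (tendsto_const_nhds.mul (Real.continuous_exp.continuousAt.tendsto.comp hA0)).add
        (tendsto_const_nhds.mul (Real.continuous_exp.continuousAt.tendsto.comp hB0))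
    simpa [hSdef] using h1
  have hSlt : ∀ᶠ r in l, S r - 1 < 0 := by
    have h1 : ∀ᶠ r in l, (S r - 1)/r^2 < 0 := hS1.eventually (eventually_lt_nhds hL₁neg)
    filter_upwards [h1, hrpos] with r h1' h2'
    have hr2 : (0:ℝ) < r^2 := by positivity
    by_contra h
    push_neg at h
    have : 0 ≤ (S r - 1)/r^2 := div_nonneg (by linarith) (le_of_lt hr2)
    linarith
  have hlogfrac : Filter.Tendsto (fun r => Real.log (S r)/(S r - 1)) l (nhds 1) := by
    have hd : HasDerivAt Real.log 1 1 := by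
      simpa using Real.hasDerivAt_log one_ne_zero
    have hslope := hasDerivAt_iff_tendsto_slope.mp hd
    have hSne : Filter.Tendsto S l (nhdsWithin 1 {(1:ℝ)}ᶜ) :=
      tendsto_nhdsWithin_of_tendsto_nhds_of_eventually_within _ hStends
        (hSlt.mono fun r hr => by simp; intro h; rw [h] at hr; norm_num at hr)
    have h1 := hslope.comp hSne
    refine Filter.Tendsto.congr' ?_ h1
    filter_upwards with r
    simp [Function.comp, slope_def_field]
  set L : ℝ := t*(1-t)*(1-m₁^2) with hLdef
  have hD : Filter.Tendsto (fun r => (-2*Real.log (S r))/r^2) l (nhds L) := by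
    have h1 := (hlogfrac.mul hS1).const_mul (-2 : ℝ)
    have hval : (-2:ℝ) * (1 * L₁) = L := by rw [hL₁def, hLdef]; ring
    rw [hval] at h1
    refine Filter.Tendsto.congr' ?_ h1
    filter_upwards [hSlt, hrpos] with r h1' h2'
    have hb : S r - 1 ≠ 0 := ne_of_lt h1'
    have hrne : r ≠ 0 := ne_of_gt h2'
    field_simp
  have hm2 : 0 < 1 - m₁^2 := by nlinarith
  have hLpos : 0 < L := by
    rw [hLdef]
    exact mul_pos (mul_pos ht0 (by linarith)) hm2
  have final := hD.inv₀ (ne_of_gt hLpos)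
  have htt : t^2 - t < 0 := by nlinarith
  have hne2 : (1 - m₁^2) * (t^2 - t) ≠ 0 := ne_of_lt (mul_neg_of_pos_of_neg hm2 htt)
  have hval : L⁻¹ = -1 / ((1 - m₁^2) * (t^2 - t)) := by
    rw [hLdef, inv_eq_one_div, div_eq_div_iff (ne_of_gt hLpos) hne2]
    ring
  rw [hval] at final
  refine Filter.Tendsto.congr' ?_ final
  filter_upwards [hIoo] with r hr
  have hgpr := (hgp r hr).2.1
  have hkey : Real.exp (-(h₀ r)^2/2) - Real.exp (-(h₀ r + r)^2/2) = c*r := by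
    linear_combination hgpr
  have e1 : Real.exp (-(t*r+h₀ r)^2/2) * Real.exp (A r) = Real.exp (-(h₀ r)^2/2) := by
    rw [← Real.exp_add]
    congr 1
    simp only [hAdef]
    ring
  have e2 : Real.exp (-(t*r+h₀ r)^2/2) * Real.exp (B r) = Real.exp (-(h₀ r + r)^2/2) := by
    rw [← Real.exp_add]
    congr 1
    simp only [hBdef]
    ring
  have hE : Real.exp (-(h₀ r)^2/2) - c*t*r = Real.exp (-(t*r+h₀ r)^2/2) * S r := by
    simp only [hSdef]
    linear_combination t*hkey - (1-t)*e1 - t*e2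
  have hlogE : Real.log (Real.exp (-(h₀ r)^2/2) - c*t*r)
      = -(t*r+h₀ r)^2/2 + Real.log (S r) := by
    rw [hE, Real.log_mul (Real.exp_ne_zero _) (ne_of_gt (hSpos r)), Real.log_exp]
  have hden : -2 * Real.log (Real.exp (-(h₀ r)^2/2) - c * t * r) - (t * r + h₀ r)^2
      = -2*Real.log (S r) := by
    rw [hlogE]; ring
  rw [hden, inv_div]
end

section
/- Fix h₀ ∈ [0,1). If r* > 0 and c* ∈ (0, e^{-1/2}) are such that (h₀, h₀ + r*) is a good pair with respect to c*, then for every 0 < r < r* there exists c ∈ (0, e^{-1/2}) such that (h₀, h₀ + r) is a good pair with respect to c. -/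
/-!
Write `f t = exp (-t²/2)` (`gauss`) and `g t = t f t = -f' t` (`gaussNegDeriv`). With `r = b - a > 0`,
the pair `(a, b)` is good with respect to `c` exactly when `c r = f a - f b` and `g a < c ≤ g b`,
i.e. when the defects `L(r) = f a - f (a + r) - r g a` and `R(r) = r g (a + r) - (f a - f (a + r))`
satisfy `L(r) > 0` and `R(r) ≥ 0`. Both vanish at `0`, with `L'(s) = g (a + s) - g a` and
`R'(s) = s g'(a + s)`. Since `g` is unimodal with maximum `e^{-1/2}` at `1`, both `L` and `R`
increase strictly on `[0, 1 - a]`; beyond `1 - a`, `L` is concave and `R` is antitone. Hence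
positivity of `L` and nonnegativity of `R` pass from `r*` to every `r ∈ (0, r*)`, and `c ≤ g (a + r)`
is strict when `a + r = 1`, which gives `c < e^{-1/2}`.
-/

open Real

open Set

noncomputable section

def gauss (t : ℝ) : ℝ := Real.exp (-t ^ 2 / 2)

def gaussNegDeriv (t : ℝ) : ℝ := t * gauss t

theorem hasDerivAt_gauss (t : ℝ) : HasDerivAt gauss (-gaussNegDeriv t) t :=
  ((hasDerivAt_pow 2 t).neg.div_const 2).exp.congr_deriv (by simp [gaussNegDeriv, gauss]; ring)

theorem hasDerivAt_gaussNegDeriv (t : ℝ) :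
    HasDerivAt gaussNegDeriv ((1 - t ^ 2) * gauss t) t :=
  ((hasDerivAt_id' t).mul (hasDerivAt_gauss t)).congr_deriv (by simp [gaussNegDeriv]; ring)

theorem gaussNegDeriv_nonneg {t : ℝ} (ht : 0 ≤ t) : 0 ≤ gaussNegDeriv t :=
  mul_nonneg ht (Real.exp_pos _).le

-- For `0 < t ≠ 1`, `t < exp ((t² - 1)/2)` is `x + 1 < exp x` at `x = (t² - 1)/2`,
-- as `t ≤ (t² + 1)/2`.
theorem gaussNegDeriv_lt {t : ℝ} (ht : t ≠ 1) : gaussNegDeriv t < Real.exp (-1 / 2) := by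
  have key : t < Real.exp ((t ^ 2 - 1) / 2) := by
    rcases le_or_gt t 0 with ht₀ | ht₀
    · exact ht₀.trans_lt (Real.exp_pos _)
    have hx : (t ^ 2 - 1) / 2 ≠ 0 := fun h ↦ ht (by nlinarith)
    nlinarith [Real.add_one_lt_exp hx, sq_nonneg (t - 1)]
  calc gaussNegDeriv t < Real.exp ((t ^ 2 - 1) / 2) * gauss t :=
        mul_lt_mul_of_pos_right key (Real.exp_pos _)
    _ = Real.exp (-1 / 2) := by rw [gauss, ← Real.exp_add]; ring_nf

theorem gaussNegDeriv_le (t : ℝ) : gaussNegDeriv t ≤ Real.exp (-1 / 2) := by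
  rcases eq_or_ne t 1 with rfl | ht
  · norm_num [gaussNegDeriv, gauss]
  · exact (gaussNegDeriv_lt ht).le

theorem strictMonoOn_gaussNegDeriv : StrictMonoOn gaussNegDeriv (Icc (-1) 1) := by
  refine strictMonoOn_of_deriv_pos (convex_Icc _ _)
    (fun x _ ↦ (hasDerivAt_gaussNegDeriv x).continuousAt.continuousWithinAt) fun x hx ↦ ?_
  rw [interior_Icc] at hx
  rw [(hasDerivAt_gaussNegDeriv x).deriv]
  have : 0 < 1 - x ^ 2 := by nlinarith [hx.1, hx.2]
  exact mul_pos this (Real.exp_pos _)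

theorem antitoneOn_gaussNegDeriv : AntitoneOn gaussNegDeriv (Ici 1) := by
  refine antitoneOn_of_deriv_nonpos (convex_Ici _)
    (fun x _ ↦ (hasDerivAt_gaussNegDeriv x).continuousAt.continuousWithinAt)
    (fun x _ ↦ (hasDerivAt_gaussNegDeriv x).differentiableAt.differentiableWithinAt) fun x hx ↦ ?_
  rw [interior_Ici] at hx
  rw [(hasDerivAt_gaussNegDeriv x).deriv]
  have : 1 - x ^ 2 ≤ 0 := by nlinarith [mem_Ioi.mp hx]
  exact mul_nonpos_of_nonpos_of_nonneg this (Real.exp_pos _).le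

section Defects

variable {a c r R : ℝ}

def leftDefect (a r : ℝ) : ℝ := gauss a - gauss (a + r) - r * gaussNegDeriv a

def rightDefect (a r : ℝ) : ℝ := r * gaussNegDeriv (a + r) - (gauss a - gauss (a + r))

@[simp]
theorem leftDefect_zero (a : ℝ) : leftDefect a 0 = 0 := by simp [leftDefect]

@[simp]
theorem rightDefect_zero (a : ℝ) : rightDefect a 0 = 0 := by simp [rightDefect]

theorem leftDefect_eq (hc : c * r = gauss a - gauss (a + r)) :
    leftDefect a r = r * (c - gaussNegDeriv a) := by
  unfold leftDefect; linear_combination -hc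

theorem rightDefect_eq (hc : c * r = gauss a - gauss (a + r)) :
    rightDefect a r = r * (gaussNegDeriv (a + r) - c) := by
  unfold rightDefect; linear_combination hc

theorem goodPair_add_iff :
    GoodPair c a (a + r) ↔
      0 < r ∧ c * r = gauss a - gauss (a + r) ∧ 0 < leftDefect a r ∧ 0 ≤ rightDefect a r := by
  change a < a + r ∧ c * a + gauss a = c * (a + r) + gauss (a + r) ∧ 0 < c - gaussNegDeriv a ∧
    c - gaussNegDeriv (a + r) ≤ 0 ↔ _
  constructor
  · rintro ⟨hr, hφ, hleft, hright⟩
    have hc : c * r = gauss a - gauss (a + r) := by linarith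
    rw [leftDefect_eq hc, rightDefect_eq hc]
    exact ⟨by linarith, hc, mul_pos (by linarith) hleft, mul_nonneg (by linarith) (by linarith)⟩
  · rintro ⟨hr, hc, hleft, hright⟩
    rw [leftDefect_eq hc, mul_pos_iff_of_pos_left hr] at hleft
    rw [rightDefect_eq hc, mul_nonneg_iff_of_pos_left hr] at hright
    exact ⟨by linarith, by linarith, hleft, by linarith⟩

theorem hasDerivAt_gauss_const_add (a s : ℝ) :
    HasDerivAt (fun x ↦ gauss (a + x)) (-gaussNegDeriv (a + s)) s := by
  simpa using (hasDerivAt_gauss (a + s)).comp_const_add a s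

theorem hasDerivAt_leftDefect (a s : ℝ) :
    HasDerivAt (leftDefect a) (gaussNegDeriv (a + s) - gaussNegDeriv a) s :=
  (((hasDerivAt_const s (gauss a)).sub (hasDerivAt_gauss_const_add a s)).sub
    ((hasDerivAt_id' s).mul_const _)).congr_deriv (by ring)

theorem hasDerivAt_rightDefect (a s : ℝ) :
    HasDerivAt (rightDefect a) (s * ((1 - (a + s) ^ 2) * gauss (a + s))) s := by
  have h := (hasDerivAt_gaussNegDeriv (a + s)).comp_const_add a s
  exact (((hasDerivAt_id' s).mul h).sub
    ((hasDerivAt_const s (gauss a)).sub (hasDerivAt_gauss_const_add a s))).congr_deriv (by ring)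

theorem strictMonoOn_leftDefect (ha : -1 ≤ a) : StrictMonoOn (leftDefect a) (Icc 0 (1 - a)) := by
  refine strictMonoOn_of_deriv_pos (convex_Icc _ _)
    (fun x _ ↦ (hasDerivAt_leftDefect a x).continuousAt.continuousWithinAt) fun x hx ↦ ?_
  rw [interior_Icc] at hx
  rw [(hasDerivAt_leftDefect a x).deriv, sub_pos]
  exact strictMonoOn_gaussNegDeriv ⟨ha, by linarith [hx.1, hx.2]⟩
    ⟨by linarith [hx.1], by linarith [hx.2]⟩ (by linarith [hx.1])

theorem concaveOn_leftDefect : ConcaveOn ℝ (Ici (1 - a)) (leftDefect a) := by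
  have hderiv : deriv (leftDefect a) = fun s ↦ gaussNegDeriv (a + s) - gaussNegDeriv a :=
    funext fun s ↦ (hasDerivAt_leftDefect a s).deriv
  refine AntitoneOn.concaveOn_of_deriv (convex_Ici _)
    (fun x _ ↦ (hasDerivAt_leftDefect a x).continuousAt.continuousWithinAt)
    (fun x _ ↦ (hasDerivAt_leftDefect a x).differentiableAt.differentiableWithinAt) ?_
  rw [interior_Ici, hderiv]
  intro x hx y hy hxy
  have hx' : 1 - a < x := hx
  have hy' : 1 - a < y := hy
  have := antitoneOn_gaussNegDeriv (a := a + x) (b := a + y)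
    (mem_Ici.2 (by linarith)) (mem_Ici.2 (by linarith)) (by linarith)
  exact sub_le_sub_right this _

theorem strictMonoOn_rightDefect (ha : -1 ≤ a) :
    StrictMonoOn (rightDefect a) (Icc 0 (1 - a)) := by
  refine strictMonoOn_of_deriv_pos (convex_Icc _ _)
    (fun x _ ↦ (hasDerivAt_rightDefect a x).continuousAt.continuousWithinAt) fun x hx ↦ ?_
  rw [interior_Icc] at hx
  rw [(hasDerivAt_rightDefect a x).deriv]
  have : 0 < 1 - (a + x) ^ 2 := by nlinarith [hx.1, hx.2]
  exact mul_pos hx.1 (mul_pos this (Real.exp_pos _))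

theorem antitoneOn_rightDefect (ha : a ≤ 1) : AntitoneOn (rightDefect a) (Ici (1 - a)) := by
  refine antitoneOn_of_deriv_nonpos (convex_Ici _)
    (fun x _ ↦ (hasDerivAt_rightDefect a x).continuousAt.continuousWithinAt)
    (fun x _ ↦ (hasDerivAt_rightDefect a x).differentiableAt.differentiableWithinAt) fun x hx ↦ ?_
  rw [interior_Ici] at hx
  rw [(hasDerivAt_rightDefect a x).deriv]
  have hx' : 1 - a < x := hx
  have : 1 - (a + x) ^ 2 ≤ 0 := by nlinarith
  exact mul_nonpos_of_nonneg_of_nonpos (by linarith)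
    (mul_nonpos_of_nonpos_of_nonneg this (Real.exp_pos _).le)

theorem leftDefect_pos_of_le (ha : a ∈ Ico (-1) 1) (hr : 0 < r) (hrR : r ≤ R)
    (hR : 0 < leftDefect a R) : 0 < leftDefect a r := by
  have hmono := strictMonoOn_leftDefect ha.1
  have hpeak : 0 < leftDefect a (1 - a) := leftDefect_zero a ▸
    hmono ⟨le_rfl, by linarith [ha.2]⟩ ⟨by linarith [ha.2], le_rfl⟩ (by linarith [ha.2])
  rcases le_or_gt r (1 - a) with hr₁ | hr₁
  · exact leftDefect_zero a ▸ hmono ⟨le_rfl, by linarith⟩ ⟨hr.le, hr₁⟩ hr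
  · exact (lt_min hpeak hR).trans_le <| concaveOn_leftDefect.min_le_of_mem_Icc
      (mem_Ici.2 le_rfl) (mem_Ici.2 (hr₁.le.trans hrR)) ⟨hr₁.le, hrR⟩

theorem rightDefect_nonneg_of_le (ha : a ∈ Icc (-1) 1) (hr : 0 ≤ r) (hrR : r ≤ R)
    (hR : 0 ≤ rightDefect a R) : 0 ≤ rightDefect a r := by
  rcases le_or_gt r (1 - a) with hr₁ | hr₁
  · exact rightDefect_zero a ▸
      (strictMonoOn_rightDefect ha.1).monotoneOn ⟨le_rfl, by linarith⟩ ⟨hr, hr₁⟩ hr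
  · exact hR.trans (antitoneOn_rightDefect ha.2 (mem_Ici.2 hr₁.le)
      (mem_Ici.2 (hr₁.le.trans hrR)) hrR)

theorem lt_exp_neg_half_of_rightDefect_nonneg (ha : -1 ≤ a) (hr : 0 < r)
    (hc : c * r = gauss a - gauss (a + r)) (hR : 0 ≤ rightDefect a r) : c < Real.exp (-1 / 2) := by
  rw [rightDefect_eq hc, mul_nonneg_iff_of_pos_left hr, sub_nonneg] at hR
  rcases le_or_gt r (1 - a) with hr₁ | hr₁
  · have hpos : 0 < rightDefect a r :=
      rightDefect_zero a ▸ strictMonoOn_rightDefect ha ⟨le_rfl, by linarith⟩ ⟨hr.le, hr₁⟩ hr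
    rw [rightDefect_eq hc, mul_pos_iff_of_pos_left hr, sub_pos] at hpos
    exact hpos.trans_le (gaussNegDeriv_le _)
  · exact hR.trans_lt (gaussNegDeriv_lt (by linarith))

end Defects

end

theorem stmt14_general (h₀ : ℝ) (hh₀ : h₀ ∈ Set.Ico (0:ℝ) 1)
    (rstar cstar : ℝ)
    (hgp : GoodPair cstar h₀ (h₀ + rstar)) :
    ∀ r : ℝ, 0 < r → r < rstar →
      ∃ c ∈ Set.Ioo (0:ℝ) (Real.exp (-1/2)), GoodPair c h₀ (h₀ + r) := by
  intro r hr hrR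
  obtain ⟨-, -, hleftR, hrightR⟩ := goodPair_add_iff.1 hgp
  have hleft := leftDefect_pos_of_le ⟨by linarith [hh₀.1], hh₀.2⟩ hr hrR.le hleftR
  have hright := rightDefect_nonneg_of_le ⟨by linarith [hh₀.1], hh₀.2.le⟩ hr.le hrR.le hrightR
  set c := (gauss h₀ - gauss (h₀ + r)) / r
  have hc : c * r = gauss h₀ - gauss (h₀ + r) := div_mul_cancel₀ _ hr.ne'
  have hc_pos : 0 < c := by
    rw [leftDefect_eq hc, mul_pos_iff_of_pos_left hr, sub_pos] at hleft
    exact (gaussNegDeriv_nonneg hh₀.1).trans_lt hleft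
  exact ⟨c, ⟨hc_pos, lt_exp_neg_half_of_rightDefect_nonneg (by linarith [hh₀.1]) hr hc hright⟩,
    goodPair_add_iff.2 ⟨hr, hc, hleft, hright⟩⟩

theorem stmt14 (h₀ : ℝ) (hh₀ : h₀ ∈ Set.Ico (0:ℝ) 1)
    (rstar cstar : ℝ) (hr : 0 < rstar)
    (hcs : cstar ∈ Set.Ioo 0 (Real.exp (-1/2)))
    (hgp : GoodPair cstar h₀ (h₀ + rstar)) :
    ∀ r : ℝ, 0 < r → r < rstar →
      ∃ c ∈ Set.Ioo (0:ℝ) (Real.exp (-1/2)), GoodPair c h₀ (h₀ + r) :=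
  stmt14_general h₀ hh₀ rstar cstar hgp
end

section
/- For each h₀ ∈ [0,1), the set of r > 0 for which there exists c ∈ (0, e^{-1/2}) making (h₀, h₀+r) a good pair with respect to c is nonempty and bounded above; i.e., its supremum r_{h₀} satisfies 0 < r_{h₀} < ∞. -/
/-
Write `f t = exp (-t²/2)` and `g t = t * exp (-t²/2)`, so that `f' = -g` and `g` increases
strictly on `[-1, 1]` up to `g 1 = exp (-1/2)`.
For `0 ≤ a < b ≤ 1` the mean value theorem gives a slope `c = (f a - f b) / (b - a) = g ξ`
with `a < ξ < b`, so `g a < c < g b` and `(a, b)` is good for `c`; take `b = 1`.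
Conversely a good pair has `c (b - a) = f a - f b` and `c ≤ g b`, so for `0 ≤ a ≤ 1`
we get `exp (-1/2) ≤ f a ≤ (1 + b²) f b`, which fails once `b ≥ 4`.
-/

open Real

theorem hasDerivAt_exp_neg_sq_half (x : ℝ) :
    HasDerivAt (fun t : ℝ => exp (-t^2/2)) (-(x * exp (-x^2/2))) x := by
  convert ((hasDerivAt_pow 2 x).fun_neg.div_const 2).exp using 1
  push_cast
  ring

theorem hasDerivAt_mul_exp_neg_sq_half (x : ℝ) :
    HasDerivAt (fun t : ℝ => t * exp (-t^2/2)) ((1 - x^2) * exp (-x^2/2)) x :=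
  ((hasDerivAt_id' x).fun_mul (hasDerivAt_exp_neg_sq_half x)).congr_deriv (by ring)

theorem strictMonoOn_mul_exp_neg_sq_half :
    StrictMonoOn (fun t : ℝ => t * exp (-t^2/2)) (Set.Icc (-1) 1) := by
  refine strictMonoOn_of_hasDerivWithinAt_pos (convex_Icc _ _)
    (by fun_prop) (fun x _ => (hasDerivAt_mul_exp_neg_sq_half x).hasDerivWithinAt) ?_
  rw [interior_Icc]
  rintro x ⟨hx₁, hx₂⟩
  have : 0 < 1 - x^2 := by nlinarith
  positivity

theorem exists_goodPair {a b : ℝ} (ha : -1 ≤ a) (hab : a < b) (hb : b ≤ 1) :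
    ∃ c ∈ Set.Ioo (a * exp (-a^2/2)) (b * exp (-b^2/2)), GoodPair c a b := by
  obtain ⟨ξ, ⟨haξ, hξb⟩, hslope⟩ := exists_hasDerivAt_eq_slope (fun t : ℝ => exp (-t^2/2))
    _ hab (by fun_prop) (fun x _ => hasDerivAt_exp_neg_sq_half x)
  have hmono := strictMonoOn_mul_exp_neg_sq_half
  have hξ : ξ ∈ Set.Icc (-1) 1 := ⟨by linarith, by linarith⟩
  have hgaξ := hmono ⟨ha, hab.le.trans hb⟩ hξ haξ
  have hgξb := hmono hξ ⟨by linarith, hb⟩ hξb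
  refine ⟨ξ * exp (-ξ^2/2), ⟨hgaξ, hgξb⟩, hab, ?_, sub_pos.mpr hgaξ, sub_nonpos.mpr hgξb.le⟩
  rw [eq_div_iff (sub_ne_zero.mpr hab.ne')] at hslope
  linear_combination hslope

theorem one_add_sq_mul_exp_neg_sq_half_lt {b : ℝ} (hb : 4 ≤ b) :
    (1 + b^2) * exp (-b^2/2) < 1/2 := by
  have hquad := quadratic_le_exp_of_nonneg (x := b^2/2) (by positivity)
  have hb2 : 16 ≤ b^2 := by nlinarith
  have hgrowth : 2 * (1 + b^2) < exp (b^2/2) := by nlinarith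
  rw [neg_div, exp_neg, ← div_eq_mul_inv, div_lt_iff₀ (exp_pos _)]
  linarith

theorem GoodPair.lt_four {c a b : ℝ} (h : GoodPair c a b) (ha₀ : 0 ≤ a) (ha₁ : a ≤ 1) :
    b < 4 := by
  obtain ⟨hab, heq, -, hcb⟩ := h
  by_contra! hb
  have hfa : exp (-1/2) ≤ exp (-a^2/2) := exp_le_exp.mpr (by nlinarith)
  have hc : c * (b - a) ≤ b * exp (-b^2/2) * b :=
    mul_le_mul (by linarith) (by linarith) (by linarith) (by positivity)
  have hfb : exp (-a^2/2) ≤ (1 + b^2) * exp (-b^2/2) := by nlinarith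
  linarith [add_one_le_exp (-1/2), one_add_sq_mul_exp_neg_sq_half_lt hb]

theorem stmt15 (h₀ : ℝ) (hh₀ : h₀ ∈ Set.Ico (0:ℝ) 1) :
    let S : Set ℝ := {r | 0 < r ∧
      ∃ c ∈ Set.Ioo (0:ℝ) (Real.exp (-1/2)), GoodPair c h₀ (h₀ + r)}
    S.Nonempty ∧ BddAbove S ∧ 0 < sSup S := by
  obtain ⟨ha₀, ha₁⟩ := hh₀
  intro S
  have hmem : 1 - h₀ ∈ S := by
    obtain ⟨c, ⟨hc₀, hc₁⟩, hc⟩ := exists_goodPair (a := h₀) (b := 1) (by linarith) ha₁ le_rfl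
    have hc_pos : 0 < c := (by positivity : 0 ≤ h₀ * exp (-h₀^2/2)).trans_lt hc₀
    exact ⟨by linarith, c, ⟨hc_pos, by simpa using hc₁⟩, by simpa using hc⟩
  have hbdd : BddAbove S := by
    refine ⟨4, fun r ⟨_, _, _, hc⟩ => ?_⟩
    linarith [hc.lt_four ha₀ ha₁.le]
  exact ⟨⟨_, hmem⟩, hbdd, (sub_pos.mpr ha₁).trans_le (le_csSup hbdd hmem)⟩
end

section
/- Fix h₀ ∈ [0,1) and for r ∈ (0, r_{h₀}) let c(r) = (e^{-h₀²/2} − e^{-(h₀+r)²/2})/r, so that (h₀, h₀+r) is a good pair with respect to c(r). Then the function Θ(r) = ∫₀¹ r/√(−(t·r+h₀)² − 2 log(e^{−h₀²/2} − c(r)·t·r)) dt is increasing in r on (0, r_{h₀}). -/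
open Real

/-!
Write `g x = exp (-x ^ 2 / 2)`, `c = c(r)`, `ω = g h₀ - c r t` (the chord of `g` over
`[h₀, h₀ + r]` at `h₀ + r t`) and `η = -(h₀ + r t) ^ 2 - 2 log ω`, so that the integrand of `Θ`
is `(η / r ^ 2) ^ (-1/2)`. The function `G = ω (η - (r / 2) ∂ᵣη)` is concave in `t` and vanishes
at `t = 0, 1`, hence is nonnegative; since `∂ᵣ (η / r ^ 2) = -2 G / (ω r ^ 3)`, the integrand
increases with `r` pointwise.

For this to pass to the integrals, `1 / √η` must be integrable on `[0, 1]`. Because `g` lies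
above its chords, `η > 0` on `(0, 1)`, and `η` has simple zeros at the ends: its slopes there
have the signs of `c - h₀ g h₀ > 0` and of `c - (h₀ + r) g (h₀ + r)`. The good pair condition
only makes the latter `≤ 0`; it is `< 0` because the condition holds on an open range of `r`.
-/

open Set Filter Topology MeasureTheory

noncomputable def gaussian (x : ℝ) : ℝ := exp (-x ^ 2 / 2)

lemma gaussian_pos (x : ℝ) : 0 < gaussian x := exp_pos _

lemma log_gaussian (x : ℝ) : log (gaussian x) = -x ^ 2 / 2 := log_exp _

lemma continuous_gaussian : Continuous gaussian := by unfold gaussian; fun_prop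

lemma hasDerivAt_gaussian (x : ℝ) : HasDerivAt gaussian (-(x * gaussian x)) x := by
  have := ((hasDerivAt_pow 2 x).neg.div_const 2).exp
  exact this.congr_deriv (by simp [gaussian]; ring)

lemma hasDerivAt_mul_gaussian (x : ℝ) :
    HasDerivAt (fun x => x * gaussian x) ((1 - x ^ 2) * gaussian x) x :=
  ((hasDerivAt_id' x).mul (hasDerivAt_gaussian x)).congr_deriv (by ring)

lemma strictMonoOn_mul_gaussian : StrictMonoOn (fun x => x * gaussian x) (Icc 0 1) := by
  refine strictMonoOn_of_deriv_pos (convex_Icc 0 1)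
    (continuous_id.mul continuous_gaussian).continuousOn fun x hx => ?_
  rw [interior_Icc] at hx
  rw [(hasDerivAt_mul_gaussian x).deriv]
  have : 0 < 1 - x ^ 2 := by nlinarith [hx.1, hx.2]
  exact mul_pos this (gaussian_pos x)

lemma strictAntiOn_mul_gaussian : StrictAntiOn (fun x => x * gaussian x) (Ici 1) := by
  refine strictAntiOn_of_deriv_neg (convex_Ici 1)
    (continuous_id.mul continuous_gaussian).continuousOn fun x hx => ?_
  rw [interior_Ici] at hx
  rw [(hasDerivAt_mul_gaussian x).deriv]
  have : 1 - x ^ 2 < 0 := by nlinarith [mem_Ioi.1 hx]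
  exact mul_neg_of_neg_of_pos this (gaussian_pos x)

lemma min_lt_of_strictMonoOn_of_strictAntiOn {f : ℝ → ℝ} {p m x y z : ℝ}
    (hmono : StrictMonoOn f (Icc p m)) (hanti : StrictAntiOn f (Ici m))
    (hx : p ≤ x) (hxy : x < y) (hyz : y < z) : min (f x) (f z) < f y := by
  rcases le_or_gt y m with hym | hmy
  · exact (min_le_left _ _).trans_lt (hmono ⟨hx, hxy.le.trans hym⟩ ⟨hx.trans hxy.le, hym⟩ hxy)
  · exact (min_le_right _ _).trans_lt (hanti (mem_Ici.2 hmy.le) (mem_Ici.2 (hmy.trans hyz).le) hyz)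

noncomputable def chordSlope (a r : ℝ) : ℝ := (gaussian a - gaussian (a + r)) / r

/-- `F s = s * (u (a + s) - chordSlope a s)`, with `u x = x * gaussian x`, has derivative
`s * u' (a + s)`: it rises on `[0, 1 - a]` and falls afterwards, so being `≥ 0` on `(0, R)`
and `0` at `0` it cannot vanish inside. -/
lemma chordSlope_lt_of_forall_le {a R r : ℝ} (ha : a ∈ Icc 0 1)
    (h : ∀ s ∈ Ioo 0 R, chordSlope a s ≤ (a + s) * gaussian (a + s)) (hr : r ∈ Ioo 0 R) :
    chordSlope a r < (a + r) * gaussian (a + r) := by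
  set F : ℝ → ℝ := fun s => s * ((a + s) * gaussian (a + s)) - (gaussian a - gaussian (a + s))
  have hF : ∀ s, HasDerivAt F (s * ((1 - (a + s) ^ 2) * gaussian (a + s))) s := fun s => by
    have hu := (hasDerivAt_mul_gaussian (a + s)).comp_const_add a s
    have hg := (hasDerivAt_gaussian (a + s)).comp_const_add a s
    exact (((hasDerivAt_id' s).mul hu).sub (hg.const_sub _)).congr_deriv (by ring)
  have hFc : Continuous F := continuous_iff_continuousAt.2 fun s => (hF s).continuousAt
  have hmono : StrictMonoOn F (Icc 0 (1 - a)) := by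
    refine strictMonoOn_of_deriv_pos (convex_Icc _ _) hFc.continuousOn fun s hs => ?_
    rw [interior_Icc] at hs
    rw [(hF s).deriv]
    have : 0 < 1 - (a + s) ^ 2 := by nlinarith [hs.1, hs.2, ha.1]
    exact mul_pos hs.1 (mul_pos this (gaussian_pos _))
  have hanti : StrictAntiOn F (Ici (1 - a)) := by
    refine strictAntiOn_of_deriv_neg (convex_Ici _) hFc.continuousOn fun s hs => ?_
    rw [interior_Ici] at hs
    rw [(hF s).deriv]
    have hs0 : 0 < s := by linarith [mem_Ioi.1 hs, ha.2]
    have : 1 - (a + s) ^ 2 < 0 := by nlinarith [mem_Ioi.1 hs]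
    exact mul_neg_of_pos_of_neg hs0 (mul_neg_of_neg_of_pos this (gaussian_pos _))
  have hF_nonneg : ∀ s ∈ Ioo 0 R, 0 ≤ F s := fun s hs => by
    have := (div_le_iff₀ hs.1).1 (h s hs)
    simp only [F]; linarith
  have hmid : min (F 0) (F ((r + R) / 2)) < F r :=
    min_lt_of_strictMonoOn_of_strictAntiOn hmono hanti le_rfl hr.1 (by linarith [hr.2])
  have hFr : 0 < F r := by
    have h0 : F 0 = 0 := by simp [F]
    have hz := hF_nonneg ((r + R) / 2) ⟨by linarith [hr.1, hr.2], by linarith [hr.2]⟩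
    rw [h0, min_eq_left hz] at hmid
    exact hmid
  rw [chordSlope, div_lt_iff₀ hr.1]
  simp only [F] at hFr
  linarith

/-- Were `gaussian x` at most the chord value, the mean value theorem would give points
`x₁ < x₂ < b` with `u x₂ ≤ c ≤ u x₁` and `c < u b` for `u x = x * gaussian x = -gaussian'`,
impossible for the unimodal `u`. -/
lemma chord_lt_gaussian {a b c x : ℝ} (ha : 0 ≤ a) (hc : c * (b - a) = gaussian a - gaussian b)
    (hb : c < b * gaussian b) (hx : x ∈ Ioo a b) :
    gaussian a - c * (x - a) < gaussian x := by
  by_contra! hle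
  set D : ℝ → ℝ := fun y => gaussian y - gaussian a + c * (y - a)
  have hD : ∀ y, HasDerivAt D (c - y * gaussian y) y := fun y =>
    (((hasDerivAt_gaussian y).sub_const _).add
      (((hasDerivAt_id y).sub_const a).const_mul c)).congr_deriv (by ring)
  have hDc : Continuous D := continuous_iff_continuousAt.2 fun y => (hD y).continuousAt
  obtain ⟨x₁, hx₁, hD₁⟩ := exists_hasDerivAt_eq_slope D _ hx.1 hDc.continuousOn fun y _ => hD y
  obtain ⟨x₂, hx₂, hD₂⟩ := exists_hasDerivAt_eq_slope D _ hx.2 hDc.continuousOn fun y _ => hD y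
  have hDa : D a = 0 := by simp [D]
  have hDb : D b = 0 := by simp only [D]; linarith
  have hDx : D x ≤ 0 := by simp only [D]; linarith
  have hu₁ : c ≤ x₁ * gaussian x₁ := by
    have : (D x - D a) / (x - a) ≤ 0 :=
      div_nonpos_of_nonpos_of_nonneg (by linarith) (by linarith [hx.1])
    linarith
  have hu₂ : x₂ * gaussian x₂ ≤ c := by
    have : 0 ≤ (D b - D x) / (b - x) := div_nonneg (by linarith) (by linarith [hx.2])
    linarith
  have := min_lt_of_strictMonoOn_of_strictAntiOn strictMonoOn_mul_gaussian strictAntiOn_mul_gaussian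
    (ha.trans hx₁.1.le) (hx₁.2.trans hx₂.1) hx₂.2
  simp only [min_lt_iff] at this
  rcases this with h | h <;> linarith

lemma rpow_neg_one_half (x : ℝ) : x ^ (-(1 / 2 : ℝ)) = (√x)⁻¹ := by
  rcases le_or_gt 0 x with hx | hx
  · rw [rpow_neg hx, sqrt_eq_rpow]
  · rw [rpow_def_of_neg hx, sqrt_eq_zero_of_nonpos hx.le, inv_zero, neg_mul, cos_neg,
      one_div_mul_eq_div, cos_pi_div_two, mul_zero]

lemma intervalIntegrable_inv_sqrt_sub (a b : ℝ) :
    IntervalIntegrable (fun t => (√(t - a))⁻¹) volume a b := by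
  have h := (intervalIntegral.intervalIntegrable_rpow' (a := 0) (b := b - a)
    (show (-1 : ℝ) < -(1 / 2) by norm_num)).comp_sub_right a
  rw [zero_add, sub_add_cancel] at h
  simpa only [rpow_neg_one_half] using h

lemma intervalIntegrable_inv_sqrt_of_le {f g : ℝ → ℝ} {a b : ℝ} (hab : a ≤ b)
    (hf : ContinuousOn f (Icc a b)) (hg : IntervalIntegrable (fun t => (√(g t))⁻¹) volume a b)
    (hg_pos : ∀ t ∈ Ioc a b, 0 < g t) (hgf : ∀ t ∈ Ioc a b, g t ≤ f t) :
    IntervalIntegrable (fun t => (√(f t))⁻¹) volume a b := by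
  have hmeas : AEStronglyMeasurable f (volume.restrict (Ioc a b)) :=
    (hf.mono Ioc_subset_Icc_self).aestronglyMeasurable measurableSet_Ioc
  refine hg.mono_fun' ?_ ?_
  · rw [uIoc_of_le hab]
    exact (continuous_sqrt.measurable.comp_aemeasurable hmeas.aemeasurable).inv.aestronglyMeasurable
  · rw [uIoc_of_le hab]
    filter_upwards [ae_restrict_mem measurableSet_Ioc] with t ht
    rw [norm_inv, norm_of_nonneg (sqrt_nonneg _)]
    exact inv_anti₀ (sqrt_pos.2 (hg_pos t ht)) (sqrt_le_sqrt (hgf t ht))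

lemma intervalIntegrable_inv_sqrt_of_hasDerivAt_left {f : ℝ → ℝ} {a b A : ℝ} (hab : a < b)
    (hf : ContinuousOn f (Icc a b)) (hpos : ∀ t ∈ Ioc a b, 0 < f t) (ha : f a = 0)
    (hA : HasDerivAt f A a) (hA0 : 0 < A) :
    IntervalIntegrable (fun t => (√(f t))⁻¹) volume a b := by
  have hslope : ∀ᶠ s in 𝓝[>] 0, A / 2 < s⁻¹ • (f (a + s) - f a) :=
    hA.tendsto_slope_zero_right.eventually (lt_mem_nhds (half_lt_self hA0))
  obtain ⟨δ, hδ, hsub⟩ := mem_nhdsGT_iff_exists_Ioo_subset.1 hslope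
  obtain ⟨p, hap, hp⟩ := exists_between (lt_min (lt_add_of_pos_right a (mem_Ioi.1 hδ)) hab)
  have hpb : p ≤ b := (hp.trans_le (min_le_right _ _)).le
  have hpδ : p - a < δ := by linarith [hp.trans_le (min_le_left _ _)]
  refine IntervalIntegrable.trans (b := p) ?_ ?_
  · have hlin : IntervalIntegrable (fun t => (√(A / 2 * (t - a)))⁻¹) volume a p := by
      have h : (fun t => (√(A / 2 * (t - a)))⁻¹) = fun t => (√(A / 2))⁻¹ * (√(t - a))⁻¹ :=
        funext fun t => by rw [sqrt_mul (by positivity), mul_inv]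
      exact h ▸ (intervalIntegrable_inv_sqrt_sub a p).const_mul _
    refine intervalIntegrable_inv_sqrt_of_le hap.le (hf.mono (Icc_subset_Icc_right hpb)) hlin
      (fun t ht => mul_pos (half_pos hA0) (sub_pos.2 ht.1)) fun t ht => ?_
    have hs := hsub ⟨sub_pos.2 ht.1, (sub_le_sub_right ht.2 a).trans_lt hpδ⟩
    rw [mem_ofPred_eq, add_sub_cancel, ha, sub_zero, smul_eq_mul,
      lt_inv_mul_iff₀ (sub_pos.2 ht.1)] at hs
    linarith
  · refine ContinuousOn.intervalIntegrable ?_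
    rw [uIcc_of_le hpb]
    have hpos' : ∀ t ∈ Icc p b, 0 < f t := fun t ht => hpos t ⟨hap.trans_le ht.1, ht.2⟩
    exact ((hf.mono (Icc_subset_Icc_left hap.le)).sqrt).inv₀
      fun t ht => (sqrt_pos.2 (hpos' t ht)).ne'

lemma intervalIntegrable_inv_sqrt_of_hasDerivAt {f : ℝ → ℝ} {a b A B : ℝ} (hab : a < b)
    (hf : ContinuousOn f (Icc a b)) (hpos : ∀ t ∈ Ioo a b, 0 < f t) (ha : f a = 0)
    (hb : f b = 0) (hA : HasDerivAt f A a) (hA0 : 0 < A) (hB : HasDerivAt f B b) (hB0 : B < 0) :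
    IntervalIntegrable (fun t => (√(f t))⁻¹) volume a b := by
  obtain ⟨m, ham, hmb⟩ := exists_between hab
  refine IntervalIntegrable.trans (b := m) ?_ ?_
  · exact intervalIntegrable_inv_sqrt_of_hasDerivAt_left ham (hf.mono (Icc_subset_Icc_right hmb.le))
      (fun t ht => hpos t ⟨ht.1, ht.2.trans_lt hmb⟩) ha hA hA0
  · have hB' : HasDerivAt (fun t => f (-t)) (-B) (-b) :=
      (hB.comp_of_eq (-b) (hasDerivAt_neg (-b)) (neg_neg b).symm).congr_deriv (mul_neg_one B)
    have h := intervalIntegrable_inv_sqrt_of_hasDerivAt_left (neg_lt_neg hmb)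
      (hf.comp continuousOn_neg fun t ht => ⟨by linarith [ht.2], by linarith [ht.1]⟩)
      (fun t ht => hpos (-t) ⟨by linarith [ht.2], by linarith [ht.1]⟩) (by simpa using hb) hB'
      (neg_pos.2 hB0)
    exact ((IntervalIntegrable.iff_comp_neg).2 h).symm

/-- `ω` of the paper with `c = chordSlope a r`: the chord of the gaussian over `[a, a + r]`,
evaluated at `a + t r`. -/
noncomputable def gaussChord (a r t : ℝ) : ℝ := gaussian a - t * (gaussian a - gaussian (a + r))

/-- `η` of the paper. -/
noncomputable def gaussGap (a r t : ℝ) : ℝ := -(t * r + a) ^ 2 - 2 * log (gaussChord a r t)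

/-- `G` of the paper, `ω · (η - (r / 2) ∂ᵣη)`. -/
noncomputable def gapDefect (a r t : ℝ) : ℝ :=
  gaussChord a r t * (-a * (t * r + a) - 2 * log (gaussChord a r t)) -
    r * t * (a + r) * gaussian (a + r)

section

variable {a r t : ℝ}

lemma gaussChord_pos (ht : t ∈ Icc 0 1) : 0 < gaussChord a r t := by
  have := gaussian_pos a
  have := gaussian_pos (a + r)
  rw [gaussChord]
  rcases le_total (gaussian a) (gaussian (a + r)) with h | h <;>
    nlinarith [mul_nonneg ht.1 (sub_nonneg.2 h), mul_nonneg (sub_nonneg.2 ht.2) (sub_nonneg.2 h)]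

lemma hasDerivAt_gaussChord :
    HasDerivAt (gaussChord a r) (-(gaussian a - gaussian (a + r))) t :=
  (((hasDerivAt_id t).mul_const _).const_sub _).congr_deriv (by ring)

lemma gaussGap_zero : gaussGap a r 0 = 0 := by
  simp [gaussGap, gaussChord, log_gaussian]; ring

lemma gaussGap_one : gaussGap a r 1 = 0 := by
  simp [gaussGap, gaussChord, log_gaussian]; ring

lemma gaussGap_pos (ha : 0 ≤ a) (hr : 0 < r)
    (hc : chordSlope a r < (a + r) * gaussian (a + r)) (ht : t ∈ Ioo 0 1) :
    0 < gaussGap a r t := by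
  have hcr : chordSlope a r * r = gaussian a - gaussian (a + r) := div_mul_cancel₀ _ hr.ne'
  have hx : a + t * r ∈ Ioo a (a + r) := ⟨by nlinarith [ht.1], by nlinarith [ht.2]⟩
  have hlt := chord_lt_gaussian ha (by rwa [add_sub_cancel_left]) hc hx
  rw [show gaussian a - chordSlope a r * (a + t * r - a) = gaussChord a r t by
    rw [gaussChord, ← hcr]; ring] at hlt
  have hlog := log_lt_log (gaussChord_pos ⟨ht.1.le, ht.2.le⟩) hlt
  rw [log_gaussian] at hlog
  rw [gaussGap]
  nlinarith

lemma hasDerivAt_gaussGap (ht : gaussChord a r t ≠ 0) :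
    HasDerivAt (gaussGap a r)
      (-2 * r * (t * r + a) + 2 * (gaussian a - gaussian (a + r)) / gaussChord a r t) t := by
  have hsq : HasDerivAt (fun t => (t * r + a) ^ 2) (2 * (t * r + a) * r) t :=
    (((hasDerivAt_id t).mul_const r).add_const a).pow 2 |>.congr_deriv (by simp)
  exact (hsq.neg.sub ((hasDerivAt_gaussChord.log ht).const_mul 2)).congr_deriv
    (by field_simp; ring)

lemma intervalIntegrable_gaussGap (ha : 0 ≤ a) (hr : 0 < r)
    (hc₁ : a * gaussian a < chordSlope a r) (hc₂ : chordSlope a r < (a + r) * gaussian (a + r)) :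
    IntervalIntegrable (fun t => r / √(gaussGap a r t)) volume 0 1 := by
  have hcr : chordSlope a r * r = gaussian a - gaussian (a + r) := div_mul_cancel₀ _ hr.ne'
  have hd : ∀ t ∈ Icc (0 : ℝ) 1, HasDerivAt (gaussGap a r) _ t :=
    fun t ht => hasDerivAt_gaussGap (gaussChord_pos ht).ne'
  have hA : 0 < -2 * r * (0 * r + a) + 2 * (gaussian a - gaussian (a + r)) / gaussChord a r 0 := by
    have : a * r < (gaussian a - gaussian (a + r)) / gaussian a := by
      rw [lt_div_iff₀ (gaussian_pos a), ← hcr]; nlinarith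
    simp only [gaussChord, zero_mul, sub_zero, mul_div_assoc]
    linarith
  have hB : -2 * r * (1 * r + a) + 2 * (gaussian a - gaussian (a + r)) / gaussChord a r 1 < 0 := by
    have : (gaussian a - gaussian (a + r)) / gaussian (a + r) < (a + r) * r := by
      rw [div_lt_iff₀ (gaussian_pos _), ← hcr]; nlinarith
    simp only [gaussChord, one_mul, sub_sub_cancel, mul_div_assoc]
    linarith
  have h := intervalIntegrable_inv_sqrt_of_hasDerivAt zero_lt_one
    (fun t ht => (hd t ht).continuousAt.continuousWithinAt) (fun t ht => gaussGap_pos ha hr hc₂ ht)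
    gaussGap_zero gaussGap_one (hd 0 (left_mem_Icc.2 zero_le_one)) hA
    (hd 1 (right_mem_Icc.2 zero_le_one)) hB
  simpa only [div_eq_mul_inv] using h.const_mul r

lemma gapDefect_zero : gapDefect a r 0 = 0 := by
  simp only [gapDefect, gaussChord, zero_mul, sub_zero, log_gaussian]; ring

lemma gapDefect_one : gapDefect a r 1 = 0 := by
  simp only [gapDefect, gaussChord, one_mul, sub_sub_cancel, log_gaussian]; ring

/-- `∂ₜ² G = 2 k (a r - k / ω)` with `k = r · chordSlope a r > a r · gaussian a ≥ a r ω`. -/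
lemma concaveOn_gapDefect (ha : 0 ≤ a) (hr : 0 < r) (hc : a * gaussian a < chordSlope a r) :
    ConcaveOn ℝ (Icc 0 1) (gapDefect a r) := by
  set k := gaussian a - gaussian (a + r)
  have hk : a * gaussian a * r < k := (lt_div_iff₀ hr).1 hc
  have hk0 : 0 < k := lt_of_le_of_lt (by have := gaussian_pos a; positivity) hk
  set L : ℝ → ℝ := fun t => -a * (t * r + a) - 2 * log (gaussChord a r t)
  have hL : ∀ t ∈ Icc (0 : ℝ) 1, HasDerivAt L (-a * r + 2 * k / gaussChord a r t) t := by
    intro t ht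
    have hlin : HasDerivAt (fun t => -a * (t * r + a)) (-a * r) t :=
      (((hasDerivAt_id t).mul_const r).add_const a).const_mul (-a) |>.congr_deriv (by simp)
    exact (hlin.sub ((hasDerivAt_gaussChord.log (gaussChord_pos ht).ne').const_mul 2)).congr_deriv
      (by field_simp; ring)
  set G' : ℝ → ℝ := fun t =>
    -k * L t - a * r * gaussChord a r t + 2 * k - r * (a + r) * gaussian (a + r)
  have hG : ∀ t ∈ Icc (0 : ℝ) 1, HasDerivAt (gapDefect a r) (G' t) t := by
    intro t ht
    have hlin : HasDerivAt (fun t => r * t * (a + r) * gaussian (a + r))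
        (r * (a + r) * gaussian (a + r)) t :=
      ((((hasDerivAt_id t).const_mul r).mul_const (a + r)).mul_const _).congr_deriv (by ring)
    exact ((hasDerivAt_gaussChord.mul (hL t ht)).sub hlin).congr_deriv
      (by simp only [G', L]; field_simp [(gaussChord_pos ht).ne']; ring)
  have hG' : ∀ t ∈ Icc (0 : ℝ) 1,
      HasDerivAt G' (2 * a * r * k - 2 * k ^ 2 / gaussChord a r t) t := by
    intro t ht
    exact ((((hL t ht).const_mul (-k)).sub (hasDerivAt_gaussChord.const_mul (a * r))).add_const _
      |>.sub_const _).congr_deriv (by field_simp [(gaussChord_pos ht).ne']; ring)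
  refine concaveOn_of_hasDerivWithinAt2_nonpos (convex_Icc 0 1)
    (fun t ht => (hG t ht).continuousAt.continuousWithinAt)
    (fun t ht => (hG t (interior_subset ht)).hasDerivWithinAt)
    (fun t ht => (hG' t (interior_subset ht)).hasDerivWithinAt) fun t ht => ?_
  have hω := gaussChord_pos (a := a) (r := r) (interior_subset ht)
  have hωa : gaussChord a r t ≤ gaussian a := by
    rw [interior_Icc] at ht
    simp only [gaussChord]; nlinarith [ht.1]
  have : a * r * gaussChord a r t ≤ k := by
    nlinarith [mul_le_mul_of_nonneg_left hωa (mul_nonneg ha hr.le)]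
  rw [sub_nonpos, le_div_iff₀ hω]
  nlinarith

lemma gapDefect_nonneg (ha : 0 ≤ a) (hr : 0 < r) (hc : a * gaussian a < chordSlope a r)
    (ht : t ∈ Icc 0 1) : 0 ≤ gapDefect a r t := by
  have := (concaveOn_gapDefect ha hr hc).ge_on_segment (left_mem_Icc.2 zero_le_one)
    (right_mem_Icc.2 zero_le_one) (by rwa [segment_eq_Icc (zero_le_one' ℝ)])
  rwa [gapDefect_zero, gapDefect_one, min_self] at this

lemma hasDerivAt_gaussGap_div_sq (hr : r ≠ 0) (ht : gaussChord a r t ≠ 0) :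
    HasDerivAt (fun r => gaussGap a r t / r ^ 2)
      (-2 * gapDefect a r t / (gaussChord a r t * r ^ 3)) r := by
  have hω : HasDerivAt (fun r => gaussChord a r t) (-(t * ((a + r) * gaussian (a + r)))) r :=
    (((hasDerivAt_gaussian (a + r)).comp_const_add a r).const_sub _ |>.const_mul t
      |>.const_sub _).congr_deriv (by ring)
  have hsq : HasDerivAt (fun r => (t * r + a) ^ 2) (2 * (t * r + a) * t) r :=
    (((hasDerivAt_id r).const_mul t).add_const a).pow 2 |>.congr_deriv (by simp)
  have hη := hsq.fun_neg.fun_sub ((hω.log ht).const_mul 2)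
  exact (hη.div (hasDerivAt_pow 2 r) (pow_ne_zero 2 hr)).congr_deriv
    (by simp only [gapDefect]; field_simp; ring)

end

section

variable {a R t : ℝ}

lemma antitoneOn_gaussGap_div_sq (ha : 0 ≤ a)
    (hc : ∀ r ∈ Ioo 0 R, a * gaussian a < chordSlope a r) (ht : t ∈ Icc 0 1) :
    AntitoneOn (fun r => gaussGap a r t / r ^ 2) (Ioo 0 R) := by
  have hd : ∀ r ∈ Ioo 0 R, HasDerivAt (fun r => gaussGap a r t / r ^ 2)
      (-2 * gapDefect a r t / (gaussChord a r t * r ^ 3)) r :=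
    fun r hr => hasDerivAt_gaussGap_div_sq hr.1.ne' (gaussChord_pos ht).ne'
  refine antitoneOn_of_hasDerivWithinAt_nonpos (convex_Ioo 0 R)
    (fun r hr => (hd r hr).continuousAt.continuousWithinAt)
    (fun r hr => (hd r (interior_subset hr)).hasDerivWithinAt) fun r hr => ?_
  rw [interior_Ioo] at hr
  exact div_nonpos_of_nonpos_of_nonneg (by linarith [gapDefect_nonneg ha hr.1 (hc r hr) ht])
    (mul_nonneg (gaussChord_pos ht).le (pow_nonneg hr.1.le 3))

lemma div_sqrt_gaussGap_le (ha : 0 ≤ a) (hc : ∀ r ∈ Ioo 0 R, a * gaussian a < chordSlope a r)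
    (ht : t ∈ Ioo 0 1) {r₁ r₂ : ℝ} (hr₁ : r₁ ∈ Ioo 0 R) (hr₂ : r₂ ∈ Ioo 0 R)
    (hc₂ : chordSlope a r₂ < (a + r₂) * gaussian (a + r₂)) (h : r₁ ≤ r₂) :
    r₁ / √(gaussGap a r₁ t) ≤ r₂ / √(gaussGap a r₂ t) := by
  have hle := antitoneOn_gaussGap_div_sq ha hc ⟨ht.1.le, ht.2.le⟩ hr₁ hr₂ h
  have hpos : 0 < gaussGap a r₂ t / r₂ ^ 2 :=
    div_pos (gaussGap_pos ha hr₂.1 hc₂ ht) (pow_pos hr₂.1 2)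
  have key : ∀ r, 0 < r → r / √(gaussGap a r t) = (√(gaussGap a r t / r ^ 2))⁻¹ := fun r hr => by
    rw [sqrt_div' _ (sq_nonneg r), sqrt_sq hr.le, inv_div]
  rw [key r₁ hr₁.1, key r₂ hr₂.1]
  exact inv_anti₀ (sqrt_pos.2 hpos) (sqrt_le_sqrt hle)

end

lemma theta_chordSlope {a r : ℝ} (hr : r ≠ 0) :
    Theta (chordSlope a r) a r = ∫ t in (0 : ℝ)..1, r / √(gaussGap a r t) := by
  have h : ∀ t, chordSlope a r * t * r = t * (gaussian a - gaussian (a + r)) := fun t => by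
    rw [chordSlope]; field_simp
  simp only [Theta, gaussGap, gaussChord, ← h]
  rfl

theorem stmt16_general (h₀ : ℝ) (hh₀ : h₀ ∈ Set.Ico (0:ℝ) 1) (R : ℝ)
    (hgp : ∀ r ∈ Set.Ioo (0:ℝ) R,
      GoodPair ((Real.exp (-h₀^2/2) - Real.exp (-(h₀ + r)^2/2)) / r) h₀ (h₀ + r)) :
    MonotoneOn
      (fun r => Theta ((Real.exp (-h₀^2/2) - Real.exp (-(h₀ + r)^2/2)) / r) h₀ r)
      (Set.Ioo (0:ℝ) R) := by
  have hc₁ : ∀ r ∈ Ioo 0 R, h₀ * gaussian h₀ < chordSlope h₀ r :=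
    fun r hr => sub_pos.1 (hgp r hr).2.2.1
  have hc₂ : ∀ r ∈ Ioo 0 R, chordSlope h₀ r < (h₀ + r) * gaussian (h₀ + r) :=
    fun _ => chordSlope_lt_of_forall_le (Ico_subset_Icc_self hh₀)
      fun r hr => sub_nonpos.1 (hgp r hr).2.2.2
  intro r₁ hr₁ r₂ hr₂ h
  change Theta (chordSlope h₀ r₁) h₀ r₁ ≤ Theta (chordSlope h₀ r₂) h₀ r₂
  rw [theta_chordSlope hr₁.1.ne', theta_chordSlope hr₂.1.ne']
  exact intervalIntegral.integral_mono_on_of_le_Ioo zero_le_one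
    (intervalIntegrable_gaussGap hh₀.1 hr₁.1 (hc₁ r₁ hr₁) (hc₂ r₁ hr₁))
    (intervalIntegrable_gaussGap hh₀.1 hr₂.1 (hc₁ r₂ hr₂) (hc₂ r₂ hr₂))
    fun t ht => div_sqrt_gaussGap_le hh₀.1 hc₁ ht hr₁ hr₂ (hc₂ r₂ hr₂) h

theorem stmt16 (h₀ : ℝ) (hh₀ : h₀ ∈ Set.Ico (0:ℝ) 1) (R : ℝ) (hR : 0 < R)
    (hgp : ∀ r ∈ Set.Ioo (0:ℝ) R,
      GoodPair ((Real.exp (-h₀^2/2) - Real.exp (-(h₀ + r)^2/2)) / r) h₀ (h₀ + r)) :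
    MonotoneOn
      (fun r => Theta ((Real.exp (-h₀^2/2) - Real.exp (-(h₀ + r)^2/2)) / r) h₀ r)
      (Set.Ioo (0:ℝ) R) :=
  stmt16_general h₀ hh₀ R hgp
end

section
/- Let K be a convex body in ℝ² containing the origin whose smooth support function h satisfies e^{-(h'²+h²)/2}(h''+h) = c on S¹ for some constant c > 0. Then h is constant (K is a centered disk). Moreover: if 0 < c < e^{-1/2} there are precisely two such constant solutions, if c = e^{-1/2} exactly one, and if c > e^{-1/2} none. -/
open Real Set

/-- Sturm comparison: a solution of `w'' = (q²-1)w` with `q ≠ 0` that is positive between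
two zeros `a < b` must have `b - a > π`. -/
lemma sturm_gap_s19 {w w' q : ℝ → ℝ}
    (hw : ∀ θ, HasDerivAt w (w' θ) θ)
    (hw' : ∀ θ, HasDerivAt w' ((q θ ^ 2 - 1) * w θ) θ)
    (hq : ∀ θ, q θ ≠ 0)
    {a b : ℝ} (hab : a < b) (hbπ : b ≤ a + π)
    (ha0 : w a = 0) (hb0 : w b = 0)
    (hpos : ∀ θ ∈ Set.Ioo a b, 0 < w θ) : False := by
  set W : ℝ → ℝ := fun θ => w θ * Real.cos (θ - a) - w' θ * Real.sin (θ - a) with hW_def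
  have hWd : ∀ θ, HasDerivAt W (-(q θ ^ 2) * w θ * Real.sin (θ - a)) θ := by
    intro θ
    have hsub : HasDerivAt (fun t : ℝ => t - a) 1 θ := (hasDerivAt_id θ).sub_const a
    have hcos : HasDerivAt (fun t => Real.cos (t - a)) (-Real.sin (θ - a)) θ := by
      simpa [Function.comp_def] using (Real.hasDerivAt_cos (θ - a)).comp θ hsub
    have hsin : HasDerivAt (fun t => Real.sin (t - a)) (Real.cos (θ - a)) θ := by
      simpa [Function.comp_def] using (Real.hasDerivAt_sin (θ - a)).comp θ hsub
    have := ((hw θ).mul hcos).sub ((hw' θ).mul hsin)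
    refine this.congr_deriv ?_
    ring
  have hWanti : StrictAntiOn W (Icc a b) := by
    apply strictAntiOn_of_deriv_neg (convex_Icc a b)
    · exact Continuous.continuousOn (by
        have : Differentiable ℝ W := fun θ => (hWd θ).differentiableAt
        exact this.continuous)
    · intro x hx
      rw [interior_Icc] at hx
      rw [(hWd x).deriv]
      have hsinpos : 0 < Real.sin (x - a) := by
        apply Real.sin_pos_of_pos_of_lt_pi
        · linarith [hx.1]
        · have : x < a + π := lt_of_lt_of_le hx.2 hbπ
          linarith
      have hwpos := hpos x hx
      have hq2 : 0 < q x ^ 2 := pow_two_pos_of_ne_zero (hq x)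
      nlinarith [mul_pos (mul_pos hq2 hwpos) hsinpos]
  have hWa : W a = 0 := by simp [hW_def, ha0]
  have hWb : W b < 0 := by
    have := hWanti (left_mem_Icc.mpr hab.le) (right_mem_Icc.mpr hab.le) hab
    rwa [hWa] at this
  -- w' b ≤ 0
  have hw'b : w' b ≤ 0 := by
    have h1 : HasDerivWithinAt w (w' b) (Iio b) b := (hw b).hasDerivWithinAt
    have h2 := hasDerivWithinAt_iff_tendsto_slope.mp h1
    have hset : Iio b \ {b} = Iio b := Set.diff_singleton_eq_self (by simp)
    rw [hset] at h2
    refine le_of_tendsto h2 ?_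
    filter_upwards [Ioo_mem_nhdsLT hab] with x hx
    have hwx : 0 < w x := hpos x hx
    have : slope w b x = w x / (x - b) := by
      simp [slope_def_field, hb0]
    rw [this]
    apply div_nonpos_of_nonneg_of_nonpos hwx.le
    linarith [hx.2]
  have hsin : 0 ≤ Real.sin (b - a) := by
    apply Real.sin_nonneg_of_nonneg_of_le_pi <;> linarith
  have : 0 ≤ W b := by
    have : W b = -(w' b) * Real.sin (b - a) := by simp [hW_def, hb0]
    rw [this]
    exact mul_nonneg (by linarith) hsin
  linarith


lemma max_interval {w : ℝ → ℝ} (hw : Continuous w) {x l u : ℝ} (hx : 0 < w x)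
    (hl : l ≤ x) (hu : x ≤ u) (hwl : w l = 0) (hwu : w u = 0) :
    ∃ a b, l ≤ a ∧ a < x ∧ x < b ∧ b ≤ u ∧ w a = 0 ∧ w b = 0 ∧
      ∀ θ ∈ Set.Ioo a b, 0 < w θ := by
  set Z : Set ℝ := w ⁻¹' {0} with hZ
  have hZc : IsClosed Z := isClosed_singleton.preimage hw
  have hlZ : l ∈ Z ∩ Iic x := ⟨by simpa [hZ] using hwl, hl⟩
  have huZ : u ∈ Z ∩ Ici x := ⟨by simpa [hZ] using hwu, hu⟩
  set a := sSup (Z ∩ Iic x) with ha_def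
  set b := sInf (Z ∩ Ici x) with hb_def
  have hSa : IsClosed (Z ∩ Iic x) := hZc.inter isClosed_Iic
  have hSb : IsClosed (Z ∩ Ici x) := hZc.inter isClosed_Ici
  have haM : a ∈ Z ∩ Iic x := hSa.csSup_mem ⟨l, hlZ⟩ ⟨x, fun y hy => hy.2⟩
  have hbM : b ∈ Z ∩ Ici x := hSb.csInf_mem ⟨u, huZ⟩ ⟨x, fun y hy => hy.2⟩
  have hla : l ≤ a := le_csSup ⟨x, fun y hy => hy.2⟩ hlZ
  have hbu : b ≤ u := csInf_le ⟨x, fun y hy => hy.2⟩ huZ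
  have hwa : w a = 0 := haM.1
  have hwb : w b = 0 := hbM.1
  have hax : a < x := lt_of_le_of_ne haM.2 (fun h => by rw [h] at hwa; linarith)
  have hxb : x < b := lt_of_le_of_ne hbM.2 (fun h => by rw [← h] at hwb; linarith)
  refine ⟨a, b, hla, hax, hxb, hbu, hwa, hwb, ?_⟩
  intro θ hθ
  -- first, no zeros in Ioo a b
  have hne : ∀ z ∈ Set.Ioo a b, w z ≠ 0 := by
    intro z hz hz0
    rcases le_or_gt z x with hzx | hzx
    · have : z ≤ a := le_csSup ⟨x, fun y hy => hy.2⟩ ⟨by simpa [hZ] using hz0, hzx⟩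
      linarith [hz.1]
    · have : b ≤ z := csInf_le ⟨x, fun y hy => hy.2⟩ ⟨by simpa [hZ] using hz0, hzx.le⟩
      linarith [hz.2]
  by_contra hc
  push_neg at hc
  have hθ0 : w θ < 0 := lt_of_le_of_ne hc (hne θ hθ)
  rcases lt_or_gt_of_ne (show θ ≠ x from fun h => by rw [h] at hθ0; linarith) with hθx | hθx
  · obtain ⟨z, hz, hz0⟩ := intermediate_value_Ioo hθx.le hw.continuousOn
      (show (0:ℝ) ∈ Set.Ioo (w θ) (w x) from ⟨hθ0, hx⟩)
    exact hne z ⟨lt_trans hθ.1 hz.1, lt_trans hz.2 (lt_of_le_of_lt (le_refl x) hxb)⟩ hz0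
  · obtain ⟨z, hz, hz0⟩ := intermediate_value_Ioo' hθx.le hw.continuousOn
      (show (0:ℝ) ∈ Set.Ioo (w θ) (w x) from ⟨hθ0, hx⟩)
    exact hne z ⟨lt_trans hax hz.1, lt_trans hz.2 hθ.2⟩ hz0


lemma g_le (k : ℝ) : k * Real.exp (-k^2/2) ≤ Real.exp (-1/2) := by
  rcases le_or_gt k 0 with hk | hk
  · have : k * Real.exp (-k^2/2) ≤ 0 := mul_nonpos_of_nonpos_of_nonneg hk (exp_pos _).le
    linarith [exp_pos (-1/2 : ℝ)]
  · have h1 : k ≤ Real.exp ((k^2-1)/2) := by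
      have := Real.add_one_le_exp ((k^2-1)/2)
      nlinarith [sq_nonneg (k-1)]
    calc k * Real.exp (-k^2/2) ≤ Real.exp ((k^2-1)/2) * Real.exp (-k^2/2) :=
          mul_le_mul_of_nonneg_right h1 (exp_pos _).le
      _ = Real.exp (-1/2) := by rw [← Real.exp_add]; ring_nf
lemma g_lt (k : ℝ) (hk : k ≠ 1) : k * Real.exp (-k^2/2) < Real.exp (-1/2) := by
  rcases le_or_gt k 0 with hk0 | hk0
  · have : k * Real.exp (-k^2/2) ≤ 0 := mul_nonpos_of_nonpos_of_nonneg hk0 (exp_pos _).le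
    linarith [exp_pos (-1/2 : ℝ)]
  · have h1 : k < Real.exp ((k^2-1)/2) := by
      have := Real.add_one_le_exp ((k^2-1)/2)
      have h2 : 0 < (k-1)^2 := pow_two_pos_of_ne_zero (sub_ne_zero.mpr hk)
      nlinarith
    calc k * Real.exp (-k^2/2) < Real.exp ((k^2-1)/2) * Real.exp (-k^2/2) :=
          mul_lt_mul_of_pos_right h1 (exp_pos _)
      _ = Real.exp (-1/2) := by rw [← Real.exp_add]; ring_nf

lemma g_hasDeriv (k : ℝ) : HasDerivAt (fun t : ℝ => t * Real.exp (-t^2/2))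
    ((1 - k^2) * Real.exp (-k^2/2)) k := by
  have h1 : HasDerivAt (fun t : ℝ => -t^2/2) (-k) k := by
    have := ((hasDerivAt_id k).pow 2).neg.div_const 2
    refine this.congr_deriv ?_; simp [id]; ring
  have h2 := h1.exp
  have := (hasDerivAt_id k).mul h2
  refine this.congr_deriv ?_; simp [id]; ring

lemma g_mono : StrictMonoOn (fun t : ℝ => t * Real.exp (-t^2/2)) (Icc 0 1) := by
  apply strictMonoOn_of_deriv_pos (convex_Icc 0 1)
  · exact (Continuous.mul continuous_id (by continuity)).continuousOn
  · intro x hx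
    rw [interior_Icc] at hx
    rw [(g_hasDeriv x).deriv]
    have : x^2 < 1 := by nlinarith [hx.1, hx.2]
    have := exp_pos (-x^2/2)
    nlinarith

lemma g_anti : StrictAntiOn (fun t : ℝ => t * Real.exp (-t^2/2)) (Ici 1) := by
  apply strictAntiOn_of_deriv_neg (convex_Ici 1)
  · exact (Continuous.mul continuous_id (by continuity)).continuousOn
  · intro x hx
    rw [interior_Ici] at hx
    rw [(g_hasDeriv x).deriv]
    have hx' : (1:ℝ) < x := hx
    have : 1 < x^2 := by nlinarith
    have := exp_pos (-x^2/2)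
    nlinarith

lemma count_two {c : ℝ} (hc : 0 < c) (hlt : c < Real.exp (-1/2)) :
    ({k : ℝ | 0 ≤ k ∧ k * Real.exp (-k^2/2) = c}).ncard = 2 := by
  set g : ℝ → ℝ := fun t => t * Real.exp (-t^2/2) with hg
  have hgc : Continuous g := Continuous.mul continuous_id (by continuity)
  have hg1 : g 1 = Real.exp (-1/2) := by simp [hg]
  -- first root in [0,1]
  obtain ⟨k₁, hk₁m, hk₁⟩ : ∃ k ∈ Icc (0:ℝ) 1, g k = c := by
    have := intermediate_value_Icc (by norm_num : (0:ℝ) ≤ 1) hgc.continuousOn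
    have hmem : c ∈ Icc (g 0) (g 1) := by
      constructor
      · simp [hg]; positivity
      · rw [hg1]; exact hlt.le
    exact this hmem
  -- large K with g K < c
  set K : ℝ := max 1 (16/c) + 1 with hK
  have hK1 : 1 < K := by have := le_max_left 1 (16/c); simp only [hK]; linarith
  have hKc : 16 / c < K := by have := le_max_right 1 (16/c); simp only [hK]; linarith
  have hKpos : 0 < K := by linarith
  have hgK : g K < c := by
    have hexp : K^4/16 < Real.exp (K^2/2) := by
      have h1 : 1 + K^2/4 ≤ Real.exp (K^2/4) := by
        have := Real.add_one_le_exp (K^2/4); linarith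
      have h2 : (1 + K^2/4)^2 ≤ Real.exp (K^2/4) ^ 2 := by
        have : 0 ≤ 1 + K^2/4 := by positivity
        nlinarith
      have h3 : Real.exp (K^2/4) ^ 2 = Real.exp (K^2/2) := by
        rw [sq, ← Real.exp_add]; ring_nf
      nlinarith [sq_nonneg K, sq_nonneg (K^2)]
    have hK3 : K ≤ K^3 := by nlinarith
    have h16 : 16 / K^3 ≤ 16 / K := by
      apply div_le_div_of_nonneg_left (by norm_num) hKpos ?_ |>.trans (le_refl _)
      · exact hK3
    have h16c : 16 / K < c := by
      rw [div_lt_iff₀ hKpos]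
      calc (16:ℝ) = (16/c) * c := by field_simp
        _ < K * c := by exact mul_lt_mul_of_pos_right hKc hc
        _ = c * K := by ring
    have : g K = K / Real.exp (K^2/2) := by
      simp only [hg]
      rw [eq_div_iff (Real.exp_ne_zero _), mul_assoc, ← Real.exp_add]
      rw [show -K ^ 2 / 2 + K ^ 2 / 2 = 0 by ring, Real.exp_zero, mul_one]
    rw [this]
    have hKK : K / Real.exp (K^2/2) < K / (K^4/16) := by
      apply div_lt_div_of_pos_left hKpos (by positivity) hexp
    have : K / (K^4/16) = 16 / K^3 := by field_simp
    linarith [hKK, this ▸ hKK]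
  obtain ⟨k₂, hk₂m, hk₂⟩ : ∃ k ∈ Icc (1:ℝ) K, g k = c := by
    have := intermediate_value_Icc' (le_of_lt hK1) hgc.continuousOn
    have hmem : c ∈ Icc (g K) (g 1) := ⟨hgK.le, by rw [hg1]; exact hlt.le⟩
    exact this hmem
  have hk₁1 : k₁ ≠ 1 := fun h => by rw [h, hg1] at hk₁; linarith
  have hk₂1 : k₂ ≠ 1 := fun h => by rw [h, hg1] at hk₂; linarith
  have hk₁lt : k₁ < 1 := lt_of_le_of_ne hk₁m.2 hk₁1
  have hk₂gt : 1 < k₂ := lt_of_le_of_ne hk₂m.1 (Ne.symm hk₂1)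
  have hset : {k : ℝ | 0 ≤ k ∧ k * Real.exp (-k^2/2) = c} = {k₁, k₂} := by
    ext k
    simp only [mem_setOf_eq, mem_insert_iff, mem_singleton_iff]
    constructor
    · rintro ⟨hk0, hkc⟩
      rcases le_or_gt k 1 with hk1 | hk1
      · left
        have hgk : g k = c := hkc
        exact g_mono.injOn ⟨hk0, hk1⟩ ⟨hk₁m.1, hk₁m.2⟩ (hgk.trans hk₁.symm)
      · right
        have hgk : g k = c := hkc
        exact g_anti.injOn (le_of_lt hk1) (le_of_lt hk₂gt) (hgk.trans hk₂.symm)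
    · rintro (rfl | rfl)
      · exact ⟨hk₁m.1, hk₁⟩
      · exact ⟨by linarith, hk₂⟩
  rw [hset]
  exact Set.ncard_pair (by linarith)

theorem main_const (c : ℝ) (hc : 0 < c) (h : ℝ → ℝ)
    (hper : Function.Periodic h (2 * Real.pi))
    (hsmooth : ContDiff ℝ (⊤ : ℕ∞) h)
    (hconvex : ∀ θ, 0 < deriv (deriv h) θ + h θ)
    (hode : ∀ θ, Real.exp (-((deriv h θ)^2 + (h θ)^2)/2) * (deriv (deriv h) θ + h θ) = c) :
    ∀ θ₁ θ₂, h θ₁ = h θ₂ := by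
  set w : ℝ → ℝ := deriv h with hw_def
  set w2 : ℝ → ℝ := deriv w with hw2_def
  have hdiff : Differentiable ℝ h := hsmooth.differentiable (by simp)
  have hdh : ∀ θ, HasDerivAt h (w θ) θ := fun θ => (hdiff θ).hasDerivAt
  have hcw : ContDiff ℝ (⊤:ℕ∞) w := ((contDiff_infty_iff_deriv).mp (hsmooth.of_le (by simp))).2
  have hdw : ∀ θ, HasDerivAt w (w2 θ) θ := fun θ => ((hcw.differentiable (by simp)) θ).hasDerivAt
  set F : ℝ → ℝ := fun θ => Real.exp (-((w θ)^2 + (h θ)^2)/2) with hF_def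
  have hFpos : ∀ θ, 0 < F θ := fun θ => exp_pos _
  set p : ℝ → ℝ := fun θ => w2 θ + h θ with hp_def
  have hppos : ∀ θ, 0 < p θ := hconvex
  have hFp : ∀ θ, F θ * p θ = c := hode
  have hdF : ∀ θ, HasDerivAt F (-(c * w θ)) θ := by
    intro θ
    have h1 : HasDerivAt (fun t => -((w t)^2 + (h t)^2)/2)
        (-(w θ * p θ)) θ := by
      have := (((hdw θ).pow 2).add ((hdh θ).pow 2)).neg.div_const 2
      refine this.congr_deriv ?_
      simp only [hp_def]; ring
    have h2 := h1.exp
    convert h2 using 1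
    have := hFp θ
    simp only [hF_def] at this ⊢
    linear_combination (w θ) * this
  -- conserved quantity
  have hconst : ∀ θ, F θ + c * h θ = F 0 + c * h 0 := by
    have hG : ∀ θ, HasDerivAt (fun t => F t + c * h t) 0 θ := by
      intro θ
      have := (hdF θ).add ((hdh θ).const_mul c)
      refine this.congr_deriv ?_; ring
    intro θ
    exact is_const_of_deriv_eq_zero (fun t => (hG t).differentiableAt)
      (fun t => (hG t).deriv) θ 0
  -- p θ = c / F θ  and  HasDerivAt p (w θ * p θ ^ 2) θ
  have hpeq : p = fun θ => c / F θ := by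
    funext θ
    have := hFp θ
    rw [eq_div_iff (hFpos θ).ne']
    linarith [this]
  have hdp : ∀ θ, HasDerivAt p (w θ * p θ ^ 2) θ := by
    intro θ
    rw [hpeq]
    have := (hasDerivAt_const θ c).div (hdF θ) (hFpos θ).ne'
    refine this.congr_deriv ?_
    have hF0 := (hFpos θ).ne'
    field_simp
    ring
  have hdw2 : ∀ θ, HasDerivAt w2 ((p θ ^ 2 - 1) * w θ) θ := by
    intro θ
    have hw2p : w2 = fun t => p t - h t := by funext t; simp [hp_def]
    rw [hw2p]
    have := (hdp θ).sub (hdh θ)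
    refine this.congr_deriv ?_; ring
  have hq : ∀ θ, p θ ≠ 0 := fun θ => (hppos θ).ne'
  -- now the global argument
  by_contra hcon
  push_neg at hcon
  obtain ⟨s, t, hst⟩ := hcon
  have hπ : 0 < 2 * π := by positivity
  -- global min over [0, 2π]
  have hcont : Continuous h := hdiff.continuous
  obtain ⟨θm, hθmm, hθm⟩ := isCompact_Icc.exists_isMinOn (α := ℝ) (s := Icc 0 (2*π))
    (nonempty_Icc.mpr (by positivity)) hcont.continuousOn
  have hmin : ∀ y, h θm ≤ h y := by
    intro y
    obtain ⟨z, hz, hzy⟩ := hper.exists_mem_Ico₀ hπ y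
    exact le_of_le_of_eq (hθm (Ico_subset_Icc_self hz)) hzy.symm
  -- global max over [θm, θm + 2π]
  obtain ⟨θM, hθMm, hθM⟩ := isCompact_Icc.exists_isMaxOn (α := ℝ) (s := Icc θm (θm + 2*π))
    (nonempty_Icc.mpr (by linarith)) hcont.continuousOn
  have hmax : ∀ y, h y ≤ h θM := by
    intro y
    obtain ⟨z, hz, hzy⟩ := hper.exists_mem_Ico hπ y θm
    exact le_of_eq_of_le hzy (hθM (Ico_subset_Icc_self hz))
  have hmM : h θm < h θM := by
    rcases lt_or_ge (h θm) (h θM) with h1 | h1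
    · exact h1
    · exfalso
      apply hst
      have : ∀ y, h y = h θm := fun y => le_antisymm (le_trans (hmax y) h1) (hmin y)
      rw [this s, this t]
  -- zeros of w at θm, θM, θm + 2π
  have hwθm : w θm = 0 := by
    have : IsLocalMin h θm := Filter.Eventually.of_forall hmin
    exact this.deriv_eq_zero
  have hwθM : w θM = 0 := by
    have : IsLocalMax h θM := Filter.Eventually.of_forall hmax
    exact this.deriv_eq_zero
  have hwper_fun : Function.Periodic w (2*π) := by
    intro x
    have h1 : HasDerivAt (fun t => h (t + 2*π)) (w (x + 2*π)) x := by
      simpa [Function.comp_def] using (hdh (x + 2*π)).comp x ((hasDerivAt_id x).add_const (2*π))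
    have h2 : (fun t => h (t + 2*π)) = h := funext fun t => hper t
    rw [h2] at h1
    exact h1.unique (hdh x)
  have hwper : w (θm + 2*π) = 0 := by rw [hwper_fun θm]; exact hwθm
  have hθmM : θm < θM := hθMm.1.lt_of_ne (fun e => absurd (e ▸ hmM) (lt_irrefl _))
  have hθM2 : θM < θm + 2*π := hθMm.2.lt_of_ne (fun e => by
    rw [e] at hmM; rw [hper θm] at hmM; exact lt_irrefl _ hmM)
  -- MVT points
  obtain ⟨x₀, hx₀m, hx₀⟩ := exists_hasDerivAt_eq_slope h w hθmM
    hcont.continuousOn (fun x _ => hdh x)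
  have hx₀pos : 0 < w x₀ := by
    rw [hx₀]; exact div_pos (by linarith) (by linarith)
  obtain ⟨x₁, hx₁m, hx₁⟩ := exists_hasDerivAt_eq_slope h w hθM2
    hcont.continuousOn (fun x _ => hdh x)
  have hx₁neg : w x₁ < 0 := by
    rw [hx₁, hper θm]
    exact div_neg_of_neg_of_pos (by linarith) (by linarith)
  have hwc : Continuous w := (hcw.differentiable (by simp)).continuous
  -- positive interval around x₀
  obtain ⟨a, b, hla, hax, hxb, hbu, ha0, hb0, hpos⟩ :=
    max_interval hwc hx₀pos hx₀m.1.le hx₀m.2.le hwθm hwθM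
  have hgap1 : a + π < b := by
    by_contra H
    push_neg at H
    exact sturm_gap_s19 hdw hdw2 hq (lt_trans hax hxb) H ha0 hb0 hpos
  -- negative interval around x₁
  have hnx : 0 < -w x₁ := by linarith
  obtain ⟨a', b', hla', hax', hxb', hbu', ha0', hb0', hpos'⟩ :=
    max_interval (hwc.neg) hnx hx₁m.1.le hx₁m.2.le (by rw [Pi.neg_apply, hwθM]; ring) (by rw [Pi.neg_apply, hwper]; ring)
  have hgap2 : a' + π < b' := by
    by_contra H
    push_neg at H
    refine sturm_gap_s19 (w := fun t => -w t) (w' := fun t => -w2 t) (q := p)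
      (fun θ => (hdw θ).neg) (fun θ => by
        have := (hdw2 θ).neg
        refine this.congr_deriv ?_; ring) hq (lt_trans hax' hxb') H ha0' hb0' hpos'
  linarith

theorem stmt19 (c : ℝ) (hc : 0 < c) (h : ℝ → ℝ)
    (hper : Function.Periodic h (2 * Real.pi))
    (hsmooth : ContDiff ℝ (⊤ : ℕ∞) h)
    (hnonneg : ∀ θ, 0 ≤ h θ)
    (hconvex : ∀ θ, 0 < deriv (deriv h) θ + h θ)
    (hode : ∀ θ, Real.exp (-((deriv h θ)^2 + (h θ)^2)/2) * (deriv (deriv h) θ + h θ) = c) :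
    (∀ θ₁ θ₂, h θ₁ = h θ₂) ∧
    (c < Real.exp (-1/2) →
      ({k : ℝ | 0 ≤ k ∧ k * Real.exp (-k^2/2) = c}).ncard = 2) ∧
    (c = Real.exp (-1/2) →
      ({k : ℝ | 0 ≤ k ∧ k * Real.exp (-k^2/2) = c}).ncard = 1) ∧
    (Real.exp (-1/2) < c →
      {k : ℝ | 0 ≤ k ∧ k * Real.exp (-k^2/2) = c} = ∅) := by
  refine ⟨main_const c hc h hper hsmooth hconvex hode, fun hlt => count_two hc hlt, ?_, ?_⟩
  · intro heq
    have hset : {k : ℝ | 0 ≤ k ∧ k * Real.exp (-k^2/2) = c} = {1} := by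
      ext k
      simp only [mem_setOf_eq, mem_singleton_iff]
      constructor
      · rintro ⟨hk0, hkc⟩
        by_contra hk1
        have := g_lt k hk1
        rw [hkc, heq] at this
        exact lt_irrefl _ this
      · rintro rfl
        refine ⟨zero_le_one, ?_⟩
        rw [heq]; norm_num
    rw [hset, Set.ncard_singleton]
  · intro hgt
    ext k
    simp only [mem_setOf_eq, mem_empty_iff_false, iff_false, not_and]
    intro hk0 hkc
    have := g_le k
    rw [hkc] at this
    linarith
end
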